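/- arXiv:2406.17230 — 3 statements merged into one kernel-verified Lean document; each statement's English description precedes it below -/
import Mathlib

section
/- Let ρ be a separable bipartite density matrix on ℂ^{d_A}⊗ℂ^{d_B}. Then for all real numbers x, y ≥ 0 and every positive integer n, the extended correlation tensor satisfies ‖M_{x,y}^{(n)}‖_tr ≤ √( ((n x² + d_A − 1)/(κ_A d_A)) · ((n y² + d_B − 1)/(κ_B d_B)) ). -/
/-!
Write the separable state as `ρ = ∑ᵢ pᵢ ρᵢᴬ ⊗ ρᵢᴮ` and expand each factor in the Bloch basis
`{I/d} ∪ {Gₖ}`: `ρᵢᴬ = I/d_A + ∑ₖ aᵢₖ Gₖᴬ`. Since the Bloch basis is orthogonal for the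
Hilbert–Schmidt inner product, coefficients are unique, so `r = ∑ pᵢ aᵢ`, `s = ∑ pᵢ bᵢ`,
`T = ∑ pᵢ aᵢ bᵢᵀ`, and the extended correlation tensor is the convex combination
`∑ pᵢ uᵢ vᵢᵀ` with `uᵢ = (x/√(κ_A d_A), …, x/√(κ_A d_A), aᵢ)` and similarly `vᵢ`.
Purity `Tr ρᵢᴬ² ≤ 1` bounds `‖aᵢ‖² ≤ (d_A - 1)/(κ_A d_A)`, hence
`‖uᵢ‖² ≤ (n x² + d_A - 1)/(κ_A d_A)`, and the trace norm of `∑ pᵢ uᵢ vᵢᵀ` is at most `∑ pᵢ ‖uᵢ‖ ‖vᵢ‖`.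
-/

open Matrix BigOperators Kronecker
open scoped ComplexOrder

/-- The trace norm (sum of singular values) of a complex matrix. -/
noncomputable def traceNorm {m k : Type*} [Fintype m] [Fintype k] [DecidableEq k]
    (X : Matrix m k ℂ) : ℝ :=
  ∑ i, Real.sqrt ((Matrix.isHermitian_conjTranspose_mul_self X).eigenvalues i)

/-- A density matrix: positive semidefinite with trace one. -/
def IsDensityMatrix {d : Type*} [Fintype d] [DecidableEq d] (ρ : Matrix d d ℂ) : Prop :=
  ρ.PosSemidef ∧ ρ.trace = 1

/-- Separability of a bipartite state (finite convex mixture of product density matrices). -/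
def IsSeparableState (dA dB : ℕ)
    (ρ : Matrix (Fin dA × Fin dB) (Fin dA × Fin dB) ℂ) : Prop :=
  ∃ (N : ℕ) (p : Fin N → ℝ) (ρA : Fin N → Matrix (Fin dA) (Fin dA) ℂ)
    (ρB : Fin N → Matrix (Fin dB) (Fin dB) ℂ),
    (∀ i, 0 ≤ p i) ∧ (∑ i, p i) = 1 ∧
    (∀ i, IsDensityMatrix (ρA i)) ∧ (∀ i, IsDensityMatrix (ρB i)) ∧
    ρ = ∑ i, (p i : ℂ) • (ρA i ⊗ₖ ρB i)

/-- The extended correlation tensor `M_{x,y}^{(n)}` built from the Bloch data `r, s, T`. -/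
noncomputable def extCorrTensor (dA dB n : ℕ) (κA κB x y : ℝ)
    (r : Fin (dA ^ 2 - 1) → ℂ) (s : Fin (dB ^ 2 - 1) → ℂ)
    (T : Matrix (Fin (dA ^ 2 - 1)) (Fin (dB ^ 2 - 1)) ℂ) :
    Matrix (Fin n ⊕ Fin (dA ^ 2 - 1)) (Fin n ⊕ Fin (dB ^ 2 - 1)) ℂ :=
  Matrix.fromBlocks
    (Matrix.of fun _ _ => ((x * y / Real.sqrt (κA * κB * dA * dB) : ℝ) : ℂ))
    (Matrix.of fun _ j => ((x / Real.sqrt (κA * dA) : ℝ) : ℂ) * s j)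
    (Matrix.of fun i _ => ((y / Real.sqrt (κB * dB) : ℝ) : ℂ) * r i)
    T

open scoped InnerProductSpace

theorem sum_smul_kronecker_sum_smul {ια ιβ m n m' n' : Type*} [Fintype ια] [Fintype ιβ]
    (c : ια → ℂ) (A : ια → Matrix m n ℂ) (d : ιβ → ℂ) (B : ιβ → Matrix m' n' ℂ) :
    (∑ α, c α • A α) ⊗ₖ (∑ β, d β • B β) = ∑ α, ∑ β, (c α * d β) • (A α ⊗ₖ B β) := by
  ext ⟨i, i'⟩ ⟨j, j'⟩
  simp [Matrix.sum_apply, Finset.sum_mul_sum, mul_mul_mul_comm]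

section TraceOrthogonal

variable {ι ι' m n m' n' : Type*} [Fintype m] [Fintype n] [Fintype m'] [Fintype n']
  [DecidableEq ι] [DecidableEq ι']

def IsTraceOrthogonal (G : ι → Matrix m n ℂ) (w : ι → ℂ) : Prop :=
  ∀ i j, ((G i)ᴴ * G j).trace = if i = j then w i else 0

namespace IsTraceOrthogonal

variable {G : ι → Matrix m n ℂ} {w : ι → ℂ}

theorem kronecker (hG : IsTraceOrthogonal G w) {H : ι' → Matrix m' n' ℂ} {v : ι' → ℂ}
    (hH : IsTraceOrthogonal H v) :
    IsTraceOrthogonal (fun p : ι × ι' => G p.1 ⊗ₖ H p.2) (fun p => w p.1 * v p.2) := by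
  rintro ⟨i, i'⟩ ⟨j, j'⟩
  simp only [conjTranspose_kronecker, ← mul_kronecker_mul, trace_kronecker, hG i j, hH i' j',
    ite_zero_mul_ite_zero, Prod.mk.injEq]

variable [Fintype ι]

theorem trace_conjTranspose_mul_sum (hG : IsTraceOrthogonal G w) (c : ι → ℂ) (j : ι) :
    ((G j)ᴴ * ∑ i, c i • G i).trace = w j * c j := by
  simp [Matrix.mul_sum, trace_sum, hG j, mul_comm]

theorem coeff_unique (hG : IsTraceOrthogonal G w) (hw : ∀ i, w i ≠ 0) {c c' : ι → ℂ}
    (h : ∑ i, c i • G i = ∑ i, c' i • G i) : c = c' := by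
  funext j
  have := hG.trace_conjTranspose_mul_sum c j
  rw [h, hG.trace_conjTranspose_mul_sum] at this
  exact (mul_left_cancel₀ (hw j) this).symm

theorem trace_conjTranspose_sum_mul_sum (hG : IsTraceOrthogonal G w) (c : ι → ℂ) :
    ((∑ i, c i • G i)ᴴ * ∑ i, c i • G i).trace = ∑ i, ((‖c i‖ ^ 2 : ℝ) : ℂ) * w i := by
  simp only [conjTranspose_sum, conjTranspose_smul, Matrix.sum_mul, smul_mul, trace_sum,
    trace_smul, hG.trace_conjTranspose_mul_sum]
  refine Finset.sum_congr rfl fun i _ => ?_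
  rw [Complex.ofReal_pow, ← Complex.conj_mul', smul_eq_mul, Complex.star_def]
  ring

end IsTraceOrthogonal

theorem IsTraceOrthogonal.eq_sum_smul_vecMulVec [Fintype ι] [Fintype ι'] {κ : Type*} [Fintype κ]
    {A : ι → Matrix m n ℂ} {wA : ι → ℂ} (hA : IsTraceOrthogonal A wA) (hwA : ∀ α, wA α ≠ 0)
    {B : ι' → Matrix m' n' ℂ} {wB : ι' → ℂ} (hB : IsTraceOrthogonal B wB)
    (hwB : ∀ β, wB β ≠ 0) {C : Matrix ι ι' ℂ} {p : κ → ℂ} {u : κ → ι → ℂ} {v : κ → ι' → ℂ}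
    (h : ∑ α, ∑ β, C α β • (A α ⊗ₖ B β) =
      ∑ i, p i • ((∑ α, u i α • A α) ⊗ₖ (∑ β, v i β • B β))) :
    C = ∑ i, p i • vecMulVec (u i) (v i) := by
  have := (hA.kronecker hB).coeff_unique (fun q => mul_ne_zero (hwA q.1) (hwB q.2))
    (c := fun q => C q.1 q.2) (c' := fun q => (∑ i, p i • vecMulVec (u i) (v i)) q.1 q.2) ?_
  · ext α β
    exact congr_fun this (α, β)
  · simp only [Fintype.sum_prod_type, h, sum_smul_kronecker_sum_smul, Finset.smul_sum, smul_smul,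
      Matrix.sum_apply, Matrix.smul_apply, vecMulVec_apply, smul_eq_mul, Finset.sum_smul]
    rw [Finset.sum_comm]
    exact Finset.sum_congr rfl fun _ _ => Finset.sum_comm

end TraceOrthogonal

section Bloch

variable {ι n : Type*} [Fintype n]

theorem card_pos_of_trace_eq_one {σ : Matrix n n ℂ} (h : σ.trace = 1) : 0 < Fintype.card n := by
  rw [Fintype.card_pos_iff]
  by_contra hn
  rw [not_nonempty_iff] at hn
  simp [trace] at h

variable [DecidableEq n]

theorem Matrix.PosSemidef.re_trace_conjTranspose_mul_self_le {σ : Matrix n n ℂ}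
    (hσ : σ.PosSemidef) : (σᴴ * σ).trace.re ≤ σ.trace.re ^ 2 := by
  set μ := hσ.isHermitian.eigenvalues
  have hsq : σᴴ * σ = Unitary.conjStarAlgAut ℂ _ hσ.isHermitian.eigenvectorUnitary
      (diagonal (RCLike.ofReal ∘ μ) * diagonal (RCLike.ofReal ∘ μ)) := by
    rw [hσ.isHermitian.eq, map_mul, ← hσ.isHermitian.spectral_theorem]
  have htr_sq : (σᴴ * σ).trace.re = ∑ i, μ i ^ 2 := by
    rw [hsq, Unitary.conjStarAlgAut_apply, trace_mul_cycle, Unitary.coe_star_mul_self, one_mul,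
      diagonal_mul_diagonal, trace_diagonal]
    simp [sq]
  have htr : σ.trace.re = ∑ i, μ i := by
    simp [hσ.isHermitian.trace_eq_sum_eigenvalues, μ]
  rw [htr_sq, htr]
  exact Finset.sum_sq_le_sq_sum_of_nonneg fun i _ => hσ.eigenvalues_nonneg i

/-- The index `none` stands for `I/d`, so a state with Bloch vector `a` is
`∑ α, Option.elim' 1 a α • blochBasis G α`. -/
noncomputable def blochBasis (G : ι → Matrix n n ℂ) : Option ι → Matrix n n ℂ :=
  Option.elim' ((Fintype.card n : ℂ)⁻¹ • 1) G

theorem exists_eq_sum_blochBasis [Fintype ι] {G : ι → Matrix n n ℂ}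
    (hG : ∀ X : Matrix n n ℂ, X.trace = 0 → X ∈ Submodule.span ℂ (Set.range G))
    {σ : Matrix n n ℂ} (hσ : σ.trace = 1) :
    ∃ a : ι → ℂ, σ = ∑ α, Option.elim' 1 a α • blochBasis G α := by
  have hcard : (Fintype.card n : ℂ) ≠ 0 := by exact_mod_cast (card_pos_of_trace_eq_one hσ).ne'
  obtain ⟨a, ha⟩ := (Submodule.mem_span_range_iff_exists_fun ℂ).1
    (hG (σ - (Fintype.card n : ℂ)⁻¹ • 1) (by simp [hσ, hcard]))
  exact ⟨a, by simp [Fintype.sum_option, blochBasis, ha]⟩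

variable [DecidableEq ι]

theorem isTraceOrthogonal_blochBasis {G : ι → Matrix n n ℂ} {w : ι → ℂ}
    (hG : IsTraceOrthogonal G w) (hGtr : ∀ i, (G i).trace = 0) :
    IsTraceOrthogonal (blochBasis G) (Option.elim' (Fintype.card n : ℂ)⁻¹ w) := by
  rintro (_ | i) (_ | j)
  · rcases eq_or_ne (Fintype.card n : ℂ) 0 with h | h
    · simp [blochBasis, h]
    · simp [blochBasis]
      field_simp
  · simp [blochBasis, hGtr]
  · simp [blochBasis, trace_conjTranspose, hGtr]
  · simpa [blochBasis] using hG i j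

theorem sum_norm_sq_blochCoeff_le [Fintype ι] {G : ι → Matrix n n ℂ} {κ : ℝ} (hκ : 0 < κ)
    (hG : IsTraceOrthogonal G fun _ => (κ : ℂ)) (hGtr : ∀ i, (G i).trace = 0)
    {σ : Matrix n n ℂ} (hσ : σ.PosSemidef) (htr : σ.trace = 1) {a : ι → ℂ}
    (ha : σ = ∑ α, Option.elim' 1 a α • blochBasis G α) :
    ∑ i, ‖a i‖ ^ 2 ≤ (Fintype.card n - 1) / (κ * Fintype.card n) := by
  have hpurity := hσ.re_trace_conjTranspose_mul_self_le
  rw [htr, ha, (isTraceOrthogonal_blochBasis hG hGtr).trace_conjTranspose_sum_mul_sum]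
    at hpurity
  simp only [Fintype.sum_option, Option.elim'_none, Option.elim'_some, norm_one, one_pow,
    Complex.ofReal_one, one_mul, ← Complex.ofReal_natCast, ← Complex.ofReal_inv,
    ← Complex.ofReal_mul, ← Complex.ofReal_sum, ← Complex.ofReal_add, Complex.ofReal_re,
    Complex.one_re, ← Finset.sum_mul] at hpurity
  have hd : (0 : ℝ) < Fintype.card n := by exact_mod_cast card_pos_of_trace_eq_one htr
  rw [le_div_iff₀ (by positivity)]
  have := mul_le_mul_of_nonneg_left hpurity hd.le
  rw [mul_add, mul_inv_cancel₀ hd.ne'] at this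
  linarith

end Bloch

/-- The coefficients of a bipartite operator in the product of the two Bloch bases: the paper's
correlation data `r, s, T` completed by the coefficient `1` of `I/d_A ⊗ I/d_B`. -/
def blochCorrelation {ι ι' : Type*} (r : ι → ℂ) (s : ι' → ℂ) (T : Matrix ι ι' ℂ) :
    Matrix (Option ι) (Option ι') ℂ :=
  of fun α β =>
    match α, β with
    | none, none => 1
    | some i, none => r i
    | none, some j => s j
    | some i, some j => T i j

theorem blochExpansion_eq_sum_blochCorrelation {ι ι' : Type*} [Fintype ι] [Fintype ι']
    {dA dB : ℕ} (GA : ι → Matrix (Fin dA) (Fin dA) ℂ) (GB : ι' → Matrix (Fin dB) (Fin dB) ℂ)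
    (r : ι → ℂ) (s : ι' → ℂ) (T : Matrix ι ι' ℂ) :
    ((dA : ℂ)⁻¹ • (1 : Matrix (Fin dA) (Fin dA) ℂ)) ⊗ₖ
        ((dB : ℂ)⁻¹ • (1 : Matrix (Fin dB) (Fin dB) ℂ))
      + ∑ i, r i • (GA i ⊗ₖ ((dB : ℂ)⁻¹ • (1 : Matrix (Fin dB) (Fin dB) ℂ)))
      + ∑ j, s j • (((dA : ℂ)⁻¹ • (1 : Matrix (Fin dA) (Fin dA) ℂ)) ⊗ₖ GB j)
      + ∑ i, ∑ j, T i j • (GA i ⊗ₖ GB j) =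
    ∑ α, ∑ β, blochCorrelation r s T α β • (blochBasis GA α ⊗ₖ blochBasis GB β) := by
  simp [Fintype.sum_option, blochBasis, blochCorrelation, Finset.sum_add_distrib]
  abel

theorem sum_norm_inner_sq_le_of_orthonormal_ne_zero {E ι : Type*} [NormedAddCommGroup E]
    [InnerProductSpace ℂ E] [Fintype ι] {v : ι → E}
    (hv : Orthonormal ℂ fun i : {i // v i ≠ 0} => v i) (x : E) :
    ∑ i, ‖⟪v i, x⟫_ℂ‖ ^ 2 ≤ ‖x‖ ^ 2 := by
  classical
  calc ∑ i, ‖⟪v i, x⟫_ℂ‖ ^ 2 = ∑ i with v i ≠ 0, ‖⟪v i, x⟫_ℂ‖ ^ 2 :=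
        (Finset.sum_filter_of_ne (p := fun i => v i ≠ 0) fun i _ hi h0 => hi (by simp [h0])).symm
    _ = ∑ i : {i // v i ≠ 0}, ‖⟪v i, x⟫_ℂ‖ ^ 2 := Finset.sum_subtype _ (by simp) _
    _ ≤ ‖x‖ ^ 2 := hv.sum_inner_products_le x

section TraceNorm

variable {m k : Type*} [Fintype m] [Fintype k] [DecidableEq k]

noncomputable def rightSingularBasis (M : Matrix m k ℂ) :
    OrthonormalBasis k ℂ (EuclideanSpace ℂ k) :=
  (isHermitian_conjTranspose_mul_self M).eigenvectorBasis

noncomputable def singularValue (M : Matrix m k ℂ) (j : k) : ℝ :=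
  √((isHermitian_conjTranspose_mul_self M).eigenvalues j)

/-- Zero when the singular value vanishes, since then `σ⁻¹ = 0`; the nonzero ones are
orthonormal. -/
noncomputable def leftSingularVector (M : Matrix m k ℂ) (j : k) : EuclideanSpace ℂ m :=
  ((singularValue M j)⁻¹ : ℂ) • toEuclideanLin M (rightSingularBasis M j)

theorem traceNorm_eq_sum_singularValue (M : Matrix m k ℂ) :
    traceNorm M = ∑ j, singularValue M j := rfl

theorem inner_toEuclideanLin_rightSingularBasis (M : Matrix m k ℂ) (i j : k) :
    ⟪toEuclideanLin M (rightSingularBasis M i), toEuclideanLin M (rightSingularBasis M j)⟫_ℂ =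
      if i = j then ((singularValue M j ^ 2 : ℝ) : ℂ) else 0 := by
  classical
  have hA := isHermitian_conjTranspose_mul_self M
  have hMM : toEuclideanLin Mᴴ (toEuclideanLin M (rightSingularBasis M j)) =
      ((singularValue M j ^ 2 : ℝ) : ℂ) • rightSingularBasis M j := by
    rw [singularValue, Real.sq_sqrt ((posSemidef_conjTranspose_mul_self M).eigenvalues_nonneg j)]
    ext1
    simp only [toLpLin_apply, mulVec_mulVec, rightSingularBasis, hA.mulVec_eigenvectorBasis]
    simp [Complex.real_smul]
  rw [← LinearMap.adjoint_inner_right, ← toEuclideanLin_conjTranspose_eq_adjoint, hMM,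
    inner_smul_right, orthonormal_iff_ite.1 (rightSingularBasis M).orthonormal]
  split_ifs <;> simp

theorem inner_leftSingularVector (M : Matrix m k ℂ) (i j : k) :
    ⟪leftSingularVector M i, toEuclideanLin M (rightSingularBasis M j)⟫_ℂ =
      if i = j then (singularValue M j : ℂ) else 0 := by
  rw [leftSingularVector, inner_smul_left, inner_toEuclideanLin_rightSingularBasis]
  split_ifs with h
  · subst h
    rcases eq_or_ne (singularValue M i) 0 with h0 | h0
    · simp [h0]
    · simp
      field_simp
  · simp

theorem orthonormal_leftSingularVector (M : Matrix m k ℂ) :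
    Orthonormal ℂ fun j : {j // leftSingularVector M j ≠ 0} => leftSingularVector M j := by
  rw [orthonormal_iff_ite]
  rintro ⟨i, -⟩ ⟨j, hj⟩
  have hσ : singularValue M j ≠ 0 := fun h => hj (by simp [leftSingularVector, h])
  change ⟪_, ((singularValue M j)⁻¹ : ℂ) • _⟫_ℂ = _
  rw [inner_smul_right, inner_leftSingularVector]
  split_ifs with h₁ h₂ h₂
  · simp [hσ]
  · exact absurd (Subtype.ext h₁) h₂
  · simp_all
  · simp

omit [Fintype m] in
theorem toEuclideanLin_sum_vecMulVec {ι : Type*} [Fintype ι] (u : ι → m → ℂ) (v : ι → k → ℂ)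
    (w : EuclideanSpace ℂ k) :
    toEuclideanLin (∑ i, vecMulVec (u i) (v i)) w =
      ∑ i, ⟪WithLp.toLp 2 (star (v i)), w⟫_ℂ • WithLp.toLp 2 (u i) := by
  ext a
  simp [toLpLin_apply, vecMulVec_mulVec, EuclideanSpace.inner_eq_star_dotProduct, dotProduct_comm]

/-- Each singular value is `⟪eⱼ, M zⱼ⟫ = ∑ᵢ ⟪eⱼ, uᵢ⟫ ⟪zⱼ, v̄ᵢ⟫`; summing over `j`,
Cauchy–Schwarz and Bessel's inequality for the singular vectors `e` and `z` give the bound. -/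
theorem traceNorm_sum_vecMulVec_le {ι : Type*} [Fintype ι] (u : ι → m → ℂ) (v : ι → k → ℂ) :
    traceNorm (∑ i, vecMulVec (u i) (v i)) ≤
      ∑ i, ‖WithLp.toLp 2 (u i)‖ * ‖WithLp.toLp 2 (v i)‖ := by
  set M := ∑ i, vecMulVec (u i) (v i)
  set e := leftSingularVector M
  set z := rightSingularBasis M
  set v' := fun i => WithLp.toLp 2 (star (v i))
  have hσ : ∀ j, (singularValue M j : ℂ) = ∑ i, ⟪v' i, z j⟫_ℂ * ⟪e j, WithLp.toLp 2 (u i)⟫_ℂ := by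
    intro j
    have := inner_leftSingularVector M j j
    rw [if_pos rfl, toEuclideanLin_sum_vecMulVec, inner_sum] at this
    simp only [inner_smul_right] at this
    exact this.symm
  have hv' : ∀ i, ‖v' i‖ = ‖WithLp.toLp 2 (v i)‖ := by simp [v', EuclideanSpace.norm_eq]
  calc traceNorm M = ∑ j, singularValue M j := traceNorm_eq_sum_singularValue M
    _ ≤ ∑ j, ∑ i, ‖⟪e j, WithLp.toLp 2 (u i)⟫_ℂ‖ * ‖⟪z j, v' i⟫_ℂ‖ := by
        gcongr with j
        calc singularValue M j = ‖(singularValue M j : ℂ)‖ := by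
              simp [abs_of_nonneg (Real.sqrt_nonneg _), singularValue]
          _ ≤ ∑ i, ‖⟪v' i, z j⟫_ℂ * ⟪e j, WithLp.toLp 2 (u i)⟫_ℂ‖ := by
              rw [hσ j]; exact norm_sum_le _ _
          _ = _ := by simp only [norm_mul, mul_comm, norm_inner_symm]
    _ = ∑ i, ∑ j, ‖⟪e j, WithLp.toLp 2 (u i)⟫_ℂ‖ * ‖⟪z j, v' i⟫_ℂ‖ := Finset.sum_comm
    _ ≤ ∑ i, √(∑ j, ‖⟪e j, WithLp.toLp 2 (u i)⟫_ℂ‖ ^ 2) * √(∑ j, ‖⟪z j, v' i⟫_ℂ‖ ^ 2) := by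
        gcongr with i
        exact Real.sum_mul_le_sqrt_mul_sqrt _ _ _
    _ ≤ ∑ i, ‖WithLp.toLp 2 (u i)‖ * ‖WithLp.toLp 2 (v i)‖ := by
        gcongr with i
        · exact (Real.sqrt_le_sqrt (sum_norm_inner_sq_le_of_orthonormal_ne_zero
            (orthonormal_leftSingularVector M) _)).trans_eq (Real.sqrt_sq (norm_nonneg _))
        · rw [z.sum_sq_norm_inner_right, Real.sqrt_sq (norm_nonneg _), hv']

theorem traceNorm_sum_smul_vecMulVec_le {ι : Type*} [Fintype ι] {p : ι → ℝ}
    (hp0 : ∀ i, 0 ≤ p i) (hp1 : ∑ i, p i = 1) {u : ι → m → ℂ} {v : ι → k → ℂ} {α β : ℝ}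
    (hu : ∀ i, ‖WithLp.toLp 2 (u i)‖ ≤ α) (hv : ∀ i, ‖WithLp.toLp 2 (v i)‖ ≤ β) :
    traceNorm (∑ i, (p i : ℂ) • vecMulVec (u i) (v i)) ≤ α * β := by
  simp only [← smul_vecMulVec]
  refine (traceNorm_sum_vecMulVec_le _ _).trans ?_
  calc ∑ i, ‖WithLp.toLp 2 ((p i : ℂ) • u i)‖ * ‖WithLp.toLp 2 (v i)‖
      = ∑ i, p i * (‖WithLp.toLp 2 (u i)‖ * ‖WithLp.toLp 2 (v i)‖) := by
        simp [WithLp.toLp_smul, norm_smul, abs_of_nonneg (hp0 _), mul_assoc]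
    _ ≤ ∑ i, p i * (α * β) := by
        gcongr with i
        exacts [hp0 i, (norm_nonneg _).trans (hu i), hu i, hv i]
    _ = α * β := by rw [← Finset.sum_mul, hp1, one_mul]

end TraceNorm

theorem norm_toLp_sumElim_const {ι : Type*} [Fintype ι] (n : ℕ) (c : ℂ) (a : ι → ℂ) :
    ‖WithLp.toLp 2 (Sum.elim (fun _ : Fin n => c) a)‖ = √(n * ‖c‖ ^ 2 + ∑ i, ‖a i‖ ^ 2) := by
  simp [EuclideanSpace.norm_eq, Fintype.sum_sum_type]

theorem norm_toLp_blochPadding_le {ι : Type*} [Fintype ι] {d n : ℕ} {κ : ℝ} (hκ : 0 < κ)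
    (x : ℝ) {a : ι → ℂ} (ha : ∑ i, ‖a i‖ ^ 2 ≤ (d - 1) / (κ * d)) :
    ‖WithLp.toLp 2 (Sum.elim (fun _ : Fin n => ((x / √(κ * d) : ℝ) : ℂ)) a)‖ ≤
      √((n * x ^ 2 + d - 1) / (κ * d)) := by
  rw [norm_toLp_sumElim_const]
  gcongr
  rw [Complex.norm_real, Real.norm_eq_abs, sq_abs, div_pow, Real.sq_sqrt (by positivity)]
  calc (n : ℝ) * (x ^ 2 / (κ * d)) + ∑ i, ‖a i‖ ^ 2
      ≤ n * (x ^ 2 / (κ * d)) + (d - 1) / (κ * d) := by gcongr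
    _ = (n * x ^ 2 + d - 1) / (κ * d) := by ring

theorem extCorrTensor_eq_sum_smul_vecMulVec {dA dB n N : ℕ} {κA κB : ℝ} (hκA : 0 ≤ κA)
    (x y : ℝ) {r : Fin (dA ^ 2 - 1) → ℂ} {s : Fin (dB ^ 2 - 1) → ℂ}
    {T : Matrix (Fin (dA ^ 2 - 1)) (Fin (dB ^ 2 - 1)) ℂ} (p : Fin N → ℝ)
    (a : Fin N → Fin (dA ^ 2 - 1) → ℂ) (b : Fin N → Fin (dB ^ 2 - 1) → ℂ)
    (h : blochCorrelation r s T =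
      ∑ i, (p i : ℂ) • vecMulVec (Option.elim' 1 (a i)) (Option.elim' 1 (b i))) :
    extCorrTensor dA dB n κA κB x y r s T =
      ∑ i, (p i : ℂ) • vecMulVec (Sum.elim (fun _ : Fin n => ((x / √(κA * dA) : ℝ) : ℂ)) (a i))
        (Sum.elim (fun _ : Fin n => ((y / √(κB * dB) : ℝ) : ℂ)) (b i)) := by
  have hsqrt : √(κA * κB * dA * dB) = √(κA * dA) * √(κB * dB) := by
    rw [← Real.sqrt_mul (by positivity)]
    ring_nf
  ext (c | c) (d | d)
  · have := congr_fun₂ h none none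
    simp [blochCorrelation, Matrix.sum_apply, vecMulVec_apply] at this
    simp [extCorrTensor, Matrix.sum_apply, vecMulVec_apply, hsqrt]
    rw [← Finset.sum_mul, ← this, one_mul]
    ring
  · have := congr_fun₂ h none (some d)
    simp [blochCorrelation, Matrix.sum_apply, vecMulVec_apply] at this
    simp [extCorrTensor, Matrix.sum_apply, vecMulVec_apply, this, Finset.mul_sum]
    exact Finset.sum_congr rfl fun _ _ => by ring
  · have := congr_fun₂ h (some c) none
    simp [blochCorrelation, Matrix.sum_apply, vecMulVec_apply] at this
    simp [extCorrTensor, Matrix.sum_apply, vecMulVec_apply, this, Finset.mul_sum]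
    exact Finset.sum_congr rfl fun _ _ => by ring
  · have := congr_fun₂ h (some c) (some d)
    simp [blochCorrelation, Matrix.sum_apply, vecMulVec_apply] at this
    simp [extCorrTensor, Matrix.sum_apply, vecMulVec_apply, this]

theorem traceNorm_extCorrTensor_le_of_separable_general
    (dA dB : ℕ) (hdA : 2 ≤ dA) (hdB : 2 ≤ dB)
    (κA κB : ℝ) (hκA : 1 ≤ κA) (hκB : 1 ≤ κB)
    (GA : Fin (dA ^ 2 - 1) → Matrix (Fin dA) (Fin dA) ℂ)
    (GB : Fin (dB ^ 2 - 1) → Matrix (Fin dB) (Fin dB) ℂ)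
    (hGAtr : ∀ i, (GA i).trace = 0)
    (hGBtr : ∀ j, (GB j).trace = 0)
    (hGAorth : ∀ i j, ((GA i)ᴴ * GA j).trace = if i = j then (κA : ℂ) else 0)
    (hGBorth : ∀ i j, ((GB i)ᴴ * GB j).trace = if i = j then (κB : ℂ) else 0)
    (hGAspan : ∀ X : Matrix (Fin dA) (Fin dA) ℂ, X.trace = 0 →
      X ∈ Submodule.span ℂ (Set.range GA))
    (hGBspan : ∀ X : Matrix (Fin dB) (Fin dB) ℂ, X.trace = 0 →
      X ∈ Submodule.span ℂ (Set.range GB))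
    (ρ : Matrix (Fin dA × Fin dB) (Fin dA × Fin dB) ℂ)
    (hsep : IsSeparableState dA dB ρ)
    (r : Fin (dA ^ 2 - 1) → ℂ) (s : Fin (dB ^ 2 - 1) → ℂ)
    (T : Matrix (Fin (dA ^ 2 - 1)) (Fin (dB ^ 2 - 1)) ℂ)
    (hexp : ρ =
      ((dA : ℂ)⁻¹ • (1 : Matrix (Fin dA) (Fin dA) ℂ)) ⊗ₖ
        ((dB : ℂ)⁻¹ • (1 : Matrix (Fin dB) (Fin dB) ℂ))
      + ∑ i, r i • (GA i ⊗ₖ ((dB : ℂ)⁻¹ • (1 : Matrix (Fin dB) (Fin dB) ℂ)))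
      + ∑ j, s j • (((dA : ℂ)⁻¹ • (1 : Matrix (Fin dA) (Fin dA) ℂ)) ⊗ₖ GB j)
      + ∑ i, ∑ j, T i j • (GA i ⊗ₖ GB j))
    (x y : ℝ) (n : ℕ) :
    traceNorm (extCorrTensor dA dB n κA κB x y r s T) ≤
      Real.sqrt (((n * x ^ 2 + dA - 1) / (κA * dA)) * ((n * y ^ 2 + dB - 1) / (κB * dB))) := by
  obtain ⟨N, p, ρA, ρB, hp0, hp1, hρA, hρB, hsum⟩ := hsep
  choose a ha using fun i => exists_eq_sum_blochBasis hGAspan (hρA i).2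
  choose b hb using fun i => exists_eq_sum_blochBasis hGBspan (hρB i).2
  have hκA0 : 0 < κA := by linarith
  have hκB0 : 0 < κB := by linarith
  have hdA0 : (dA : ℂ) ≠ 0 := by norm_cast; omega
  have hdB0 : (dB : ℂ) ≠ 0 := by norm_cast; omega
  have hcorr : blochCorrelation r s T =
      ∑ i, (p i : ℂ) • vecMulVec (Option.elim' 1 (a i)) (Option.elim' 1 (b i)) :=
    (isTraceOrthogonal_blochBasis (w := fun _ => (κA : ℂ)) hGAorth hGAtr).eq_sum_smul_vecMulVec
      (by rintro (_ | i) <;> simp [hdA0, hκA0.ne'])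
      (isTraceOrthogonal_blochBasis (w := fun _ => (κB : ℂ)) hGBorth hGBtr)
      (by rintro (_ | j) <;> simp [hdB0, hκB0.ne'])
      (by rw [← blochExpansion_eq_sum_blochCorrelation, ← hexp, hsum]; simp_rw [← ha, ← hb])
  have hblochA := fun i => sum_norm_sq_blochCoeff_le hκA0 hGAorth hGAtr (hρA i).1 (hρA i).2 (ha i)
  have hblochB := fun i => sum_norm_sq_blochCoeff_le hκB0 hGBorth hGBtr (hρB i).1 (hρB i).2 (hb i)
  simp only [Fintype.card_fin] at hblochA hblochB
  have hαA : 0 ≤ (n * x ^ 2 + dA - 1) / (κA * dA) := by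
    have : (1 : ℝ) ≤ dA := by norm_cast; omega
    exact div_nonneg (by nlinarith [sq_nonneg x, n.cast_nonneg (α := ℝ)]) (by positivity)
  rw [extCorrTensor_eq_sum_smul_vecMulVec hκA0.le x y p a b hcorr, Real.sqrt_mul hαA]
  exact traceNorm_sum_smul_vecMulVec_le hp0 hp1
    (fun i => norm_toLp_blochPadding_le hκA0 x (hblochA i))
    (fun i => norm_toLp_blochPadding_le hκB0 y (hblochB i))

/-- **Theorem 1**: for a separable bipartite density matrix the trace norm of the extended
correlation tensor is bounded by
`√(((n x² + d_A − 1)/(κ_A d_A)) ((n y² + d_B − 1)/(κ_B d_B)))`. -/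
theorem traceNorm_extCorrTensor_le_of_separable
    (dA dB : ℕ) (hdA : 2 ≤ dA) (hdB : 2 ≤ dB)
    (κA κB : ℝ) (hκA : 1 ≤ κA) (hκB : 1 ≤ κB)
    (GA : Fin (dA ^ 2 - 1) → Matrix (Fin dA) (Fin dA) ℂ)
    (GB : Fin (dB ^ 2 - 1) → Matrix (Fin dB) (Fin dB) ℂ)
    (hGAtr : ∀ i, (GA i).trace = 0)
    (hGBtr : ∀ j, (GB j).trace = 0)
    (hGAorth : ∀ i j, ((GA i)ᴴ * GA j).trace = if i = j then (κA : ℂ) else 0)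
    (hGBorth : ∀ i j, ((GB i)ᴴ * GB j).trace = if i = j then (κB : ℂ) else 0)
    (hGAspan : ∀ X : Matrix (Fin dA) (Fin dA) ℂ, X.trace = 0 →
      X ∈ Submodule.span ℂ (Set.range GA))
    (hGBspan : ∀ X : Matrix (Fin dB) (Fin dB) ℂ, X.trace = 0 →
      X ∈ Submodule.span ℂ (Set.range GB))
    (ρ : Matrix (Fin dA × Fin dB) (Fin dA × Fin dB) ℂ)
    (hρ : IsDensityMatrix ρ)
    (hsep : IsSeparableState dA dB ρ)
    (r : Fin (dA ^ 2 - 1) → ℂ) (s : Fin (dB ^ 2 - 1) → ℂ)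
    (T : Matrix (Fin (dA ^ 2 - 1)) (Fin (dB ^ 2 - 1)) ℂ)
    (hexp : ρ =
      ((dA : ℂ)⁻¹ • (1 : Matrix (Fin dA) (Fin dA) ℂ)) ⊗ₖ
        ((dB : ℂ)⁻¹ • (1 : Matrix (Fin dB) (Fin dB) ℂ))
      + ∑ i, r i • (GA i ⊗ₖ ((dB : ℂ)⁻¹ • (1 : Matrix (Fin dB) (Fin dB) ℂ)))
      + ∑ j, s j • (((dA : ℂ)⁻¹ • (1 : Matrix (Fin dA) (Fin dA) ℂ)) ⊗ₖ GB j)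
      + ∑ i, ∑ j, T i j • (GA i ⊗ₖ GB j))
    (x y : ℝ) (hx : 0 ≤ x) (hy : 0 ≤ y) (n : ℕ) (hn : 0 < n) :
    traceNorm (extCorrTensor dA dB n κA κB x y r s T) ≤
      Real.sqrt (((n * x ^ 2 + dA - 1) / (κA * dA)) * ((n * y ^ 2 + dB - 1) / (κB * dB))) :=
  traceNorm_extCorrTensor_le_of_separable_general dA dB hdA hdB κA κB hκA hκB GA GB hGAtr hGBtr
    hGAorth hGBorth hGAspan hGBspan ρ hsep r s T hexp x y n
end

section
/- Let ρ be a separable bipartite density matrix on ℂ^{d_A}⊗ℂ^{d_B}. Then for all real numbers x, y ≥ 0 and every positive integer n, the normalized extended correlation tensor satisfies ‖M̂_{x,y}^{(n)}‖_tr ≤ √( (n x² + (d_A² − d_A)/κ_A) · (n y² + (d_B² − d_B)/κ_B) ). -/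
open Matrix BigOperators Kronecker
open scoped ComplexOrder

/-- The normalized extended correlation tensor `M̂_{x,y}^{(n)}` built from the normalized
Bloch data `r̂, ŝ, T̂`. -/
noncomputable def normExtCorrTensor (dA dB n : ℕ) (x y : ℝ)
    (r : Fin (dA ^ 2 - 1) → ℂ) (s : Fin (dB ^ 2 - 1) → ℂ)
    (T : Matrix (Fin (dA ^ 2 - 1)) (Fin (dB ^ 2 - 1)) ℂ) :
    Matrix (Fin n ⊕ Fin (dA ^ 2 - 1)) (Fin n ⊕ Fin (dB ^ 2 - 1)) ℂ :=
  Matrix.fromBlocks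
    (Matrix.of fun _ _ => ((x * y : ℝ) : ℂ))
    (Matrix.of fun _ j => ((x : ℝ) : ℂ) * s j)
    (Matrix.of fun i _ => ((y : ℝ) : ℂ) * r i)
    T


/-!
Write the separable state as `ρ = ∑ₖ pₖ ρₖᴬ ⊗ ρₖᴮ` and let `aₖ`, `bₖ` be the Bloch vectors of
`ρₖᴬ`, `ρₖᴮ`. Pairing the Bloch expansion of `ρ` with `Gᵢ ⊗ I`, `I ⊗ Gⱼ` and `Gᵢ ⊗ Gⱼ` gives
`r̂ = ∑ pₖ aₖ`, `ŝ = ∑ pₖ bₖ` and `T̂ = ∑ pₖ aₖ bₖᵀ`, so `M̂ = ∑ₖ pₖ uₖ vₖᵀ` with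
`uₖ = (x, …, x, aₖ)` and `vₖ = (y, …, y, bₖ)`. This is `A B†` where the columns of `A`, `B` are
`√pₖ uₖ`, `√pₖ v̄ₖ`, and `‖A B†‖_tr ≤ ‖A‖₂ ‖B‖₂`: pair the singular vectors, then use
Cauchy–Schwarz and Bessel's inequality. Finally `‖aₖ‖² ≤ (d_A² − d_A)/κ_A` is Bessel's inequality
for the orthogonal family `I, Gᵢ` (of squared norms `d_A`, `κ_A`) against `ρₖᴬ`, whose purity
`Tr (ρₖᴬ)²` is at most 1.
-/

section DotProduct

variable {𝕜 ι m : Type*} [RCLike 𝕜] [Fintype m]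

theorem norm_star_dotProduct_le (x y : m → 𝕜) :
    ‖star x ⬝ᵥ y‖ ≤ √(∑ a, ‖x a‖ ^ 2) * √(∑ a, ‖y a‖ ^ 2) := by
  have h := norm_inner_le_norm (𝕜 := 𝕜) (WithLp.toLp 2 x) (WithLp.toLp 2 y)
  rwa [EuclideanSpace.inner_toLp_toLp, dotProduct_comm, EuclideanSpace.norm_eq,
    EuclideanSpace.norm_eq] at h

theorem sum_norm_star_dotProduct_le (s : Finset ι) (x y : ι → m → 𝕜) :
    ∑ i ∈ s, ‖star (x i) ⬝ᵥ y i‖ ≤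
      √(∑ i ∈ s, ∑ a, ‖x i a‖ ^ 2) * √(∑ i ∈ s, ∑ a, ‖y i a‖ ^ 2) := by
  calc ∑ i ∈ s, ‖star (x i) ⬝ᵥ y i‖
      ≤ ∑ i ∈ s, √(∑ a, ‖x i a‖ ^ 2) * √(∑ a, ‖y i a‖ ^ 2) :=
        Finset.sum_le_sum fun i _ => norm_star_dotProduct_le _ _
    _ ≤ _ := by
        refine (Real.sum_mul_le_sqrt_mul_sqrt _ _ _).trans_eq ?_
        simp_rw [Real.sq_sqrt (Finset.sum_nonneg fun _ _ => sq_nonneg _)]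

theorem sum_norm_star_dotProduct_sq_le [DecidableEq ι] {s : Finset ι} {v : ι → m → 𝕜}
    (hv : ∀ i ∈ s, ∀ j ∈ s, star (v i) ⬝ᵥ v j = if i = j then 1 else 0) (x : m → 𝕜) :
    ∑ i ∈ s, ‖star (v i) ⬝ᵥ x‖ ^ 2 ≤ ∑ a, ‖x a‖ ^ 2 := by
  have hon : Orthonormal 𝕜 fun i : s => WithLp.toLp 2 (v i) := by
    rw [orthonormal_iff_ite]
    rintro ⟨i, hi⟩ ⟨j, hj⟩
    rw [EuclideanSpace.inner_toLp_toLp, dotProduct_comm, hv i hi j hj]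
    simp
  have h := hon.sum_inner_products_le (s := Finset.univ) (WithLp.toLp 2 x)
  simp_rw [EuclideanSpace.inner_toLp_toLp, EuclideanSpace.norm_sq_eq] at h
  rw [← Finset.sum_coe_sort s]
  simpa [dotProduct_comm] using h

theorem sum_norm_star_dotProduct_sq_div_le [DecidableEq ι] {s : Finset ι} {v : ι → m → 𝕜}
    {c : ι → ℝ} (hc : ∀ i ∈ s, 0 < c i)
    (hv : ∀ i ∈ s, ∀ j ∈ s, star (v i) ⬝ᵥ v j = if i = j then (c i : 𝕜) else 0) (x : m → 𝕜) :
    ∑ i ∈ s, ‖star (v i) ⬝ᵥ x‖ ^ 2 / c i ≤ ∑ a, ‖x a‖ ^ 2 := by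
  convert sum_norm_star_dotProduct_sq_le (v := fun i => ((√(c i) : ℝ) : 𝕜)⁻¹ • v i)
    (fun i hi j hj => ?_) x using 2 with i hi
  · rw [star_smul, smul_dotProduct, norm_smul, mul_pow, norm_star, norm_inv, RCLike.norm_ofReal,
      abs_of_nonneg (Real.sqrt_nonneg _), inv_pow, Real.sq_sqrt (hc i hi).le, inv_mul_eq_div]
  · simp only [star_smul, smul_dotProduct, dotProduct_smul, hv i hi j hj, smul_eq_mul,
      RCLike.star_def, map_inv₀, RCLike.conj_ofReal]
    split_ifs with h
    · subst h
      rw [← mul_assoc, ← mul_inv, ← RCLike.ofReal_mul, Real.mul_self_sqrt (hc i hi).le,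
        inv_mul_cancel₀ (RCLike.ofReal_ne_zero.mpr (hc i hi).ne')]
    · simp

theorem sum_sum_norm_conjTranspose_mulVec_sq_le {N : Type*} [Fintype N] (A : Matrix m N 𝕜)
    [DecidableEq ι] {s : Finset ι} {v : ι → m → 𝕜}
    (hv : ∀ i ∈ s, ∀ j ∈ s, star (v i) ⬝ᵥ v j = if i = j then 1 else 0) :
    ∑ i ∈ s, ∑ c, ‖(Aᴴ *ᵥ v i) c‖ ^ 2 ≤ ∑ a, ∑ c, ‖A a c‖ ^ 2 := by
  have hcol : ∀ i c, ‖(Aᴴ *ᵥ v i) c‖ = ‖star (v i) ⬝ᵥ fun a => A a c‖ := by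
    intro i c
    rw [← norm_star, mulVec, dotProduct, dotProduct, star_sum]
    simp [mul_comm]
  simp_rw [hcol]
  rw [Finset.sum_comm, Finset.sum_comm (s := Finset.univ) (t := Finset.univ)]
  exact Finset.sum_le_sum fun c _ => sum_norm_star_dotProduct_sq_le hv _

end DotProduct

theorem Matrix.IsHermitian.star_eigenvectorBasis_dotProduct {k : Type*} [Fintype k]
    [DecidableEq k] {H : Matrix k k ℂ} (hH : H.IsHermitian) (i j : k) :
    star ⇑(hH.eigenvectorBasis i) ⬝ᵥ ⇑(hH.eigenvectorBasis j) = if i = j then 1 else 0 := by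
  rw [dotProduct_comm, ← EuclideanSpace.inner_eq_star_dotProduct,
    orthonormal_iff_ite.mp hH.eigenvectorBasis.orthonormal]

theorem star_mulVec_dotProduct_mulVec_eigenvectorBasis {m k : Type*} [Fintype m] [Fintype k]
    [DecidableEq k] (M : Matrix m k ℂ) (i j : k) :
    star (M *ᵥ ⇑((isHermitian_conjTranspose_mul_self M).eigenvectorBasis i)) ⬝ᵥ
        (M *ᵥ ⇑((isHermitian_conjTranspose_mul_self M).eigenvectorBasis j)) =
      if i = j then ((isHermitian_conjTranspose_mul_self M).eigenvalues i : ℂ) else 0 := by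
  rw [star_mulVec, ← dotProduct_mulVec, mulVec_mulVec, IsHermitian.mulVec_eigenvectorBasis,
    dotProduct_smul, IsHermitian.star_eigenvectorBasis_dotProduct]
  split_ifs with h
  · simp [h]
  · simp

theorem exists_orthonormal_traceNorm_eq {m k : Type*} [Fintype m] [Fintype k] [DecidableEq k]
    (M : Matrix m k ℂ) :
    ∃ (s : Finset k) (u : k → m → ℂ) (w : k → k → ℂ),
      (∀ i ∈ s, ∀ j ∈ s, star (u i) ⬝ᵥ u j = if i = j then 1 else 0) ∧
      (∀ i ∈ s, ∀ j ∈ s, star (w i) ⬝ᵥ w j = if i = j then 1 else 0) ∧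
      (traceNorm M : ℂ) = ∑ i ∈ s, star (u i) ⬝ᵥ (M *ᵥ w i) := by
  set hH := isHermitian_conjTranspose_mul_self M
  set μ := hH.eigenvalues
  set w : k → k → ℂ := fun i => hH.eigenvectorBasis i
  set σ : k → ℝ := fun i => √(μ i)
  have hσσ : ∀ i, (σ i : ℂ) * σ i = μ i := fun i => by
    exact_mod_cast Real.mul_self_sqrt ((posSemidef_conjTranspose_mul_self M).eigenvalues_nonneg i)
  have hMw : ∀ i j, star (M *ᵥ w i) ⬝ᵥ (M *ᵥ w j) = if i = j then (μ i : ℂ) else 0 :=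
    star_mulVec_dotProduct_mulVec_eigenvectorBasis M
  set u : k → m → ℂ := fun i => (σ i : ℂ)⁻¹ • (M *ᵥ w i)
  have huMw : ∀ i, star (u i) ⬝ᵥ (M *ᵥ w i) = σ i := fun i => by
    simp only [u, star_smul, smul_dotProduct, hMw, if_true, ← hσσ, smul_eq_mul, star_inv₀,
      Complex.star_def, Complex.conj_ofReal]
    rw [← mul_assoc, inv_mul_mul_self]
  refine ⟨Finset.univ.filter (μ · ≠ 0), u, w, fun i hi j hj => ?_,
    fun i _ j _ => hH.star_eigenvectorBasis_dotProduct i j, ?_⟩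
  · have hσ : (σ i : ℂ) ≠ 0 := fun h0 => by
      have h := hσσ i
      rw [h0, zero_mul] at h
      exact (Finset.mem_filter.mp hi).2 (by exact_mod_cast h.symm)
    simp only [u, star_smul, smul_dotProduct, dotProduct_smul, hMw, smul_eq_mul, star_inv₀,
      Complex.star_def, Complex.conj_ofReal]
    split_ifs with h
    · subst h
      rw [← hσσ]
      field_simp [hσ]
    · simp
  · simp_rw [huMw]
    rw [Finset.sum_filter_of_ne (p := (μ · ≠ 0)) fun i _ hi h0 => hi (by simp [σ, h0]),
      traceNorm, Complex.ofReal_sum]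

theorem traceNorm_mul_conjTranspose_le {m k N : Type*} [Fintype m] [Fintype k] [DecidableEq k]
    [Fintype N] (A : Matrix m N ℂ) (B : Matrix k N ℂ) :
    traceNorm (A * Bᴴ) ≤ √(∑ a, ∑ c, ‖A a c‖ ^ 2) * √(∑ b, ∑ c, ‖B b c‖ ^ 2) := by
  obtain ⟨s, u, w, hu, hw, htr⟩ := exists_orthonormal_traceNorm_eq (A * Bᴴ)
  have hpair : ∀ i, star (u i) ⬝ᵥ ((A * Bᴴ) *ᵥ w i) = star (Aᴴ *ᵥ u i) ⬝ᵥ (Bᴴ *ᵥ w i) :=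
    fun i => by
      rw [← mulVec_mulVec, dotProduct_mulVec, star_mulVec, conjTranspose_conjTranspose]
  calc traceNorm (A * Bᴴ) ≤ ‖(traceNorm (A * Bᴴ) : ℂ)‖ := by
        rw [Complex.norm_real, Real.norm_eq_abs]
        exact le_abs_self _
    _ ≤ ∑ i ∈ s, ‖star (Aᴴ *ᵥ u i) ⬝ᵥ (Bᴴ *ᵥ w i)‖ := by
        simp_rw [htr, hpair]
        exact norm_sum_le _ _
    _ ≤ √(∑ i ∈ s, ∑ c, ‖(Aᴴ *ᵥ u i) c‖ ^ 2) * √(∑ i ∈ s, ∑ c, ‖(Bᴴ *ᵥ w i) c‖ ^ 2) :=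
        sum_norm_star_dotProduct_le _ _ _
    _ ≤ √(∑ a, ∑ c, ‖A a c‖ ^ 2) * √(∑ b, ∑ c, ‖B b c‖ ^ 2) := by
        gcongr
        · exact sum_sum_norm_conjTranspose_mulVec_sq_le A hu
        · exact sum_sum_norm_conjTranspose_mulVec_sq_le B hw

section RankOne

variable {ι m k : Type*} [Fintype ι] [Fintype m] [Fintype k] {p : ι → ℝ}

theorem sum_sum_norm_sqrt_mul_sq (hp : ∀ i, 0 ≤ p i) (f : ι → m → ℂ) :
    ∑ a, ∑ i, ‖(√(p i) : ℂ) * f i a‖ ^ 2 = ∑ i, p i * ∑ a, ‖f i a‖ ^ 2 := by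
  simp_rw [norm_mul, mul_pow, Complex.norm_real, Real.norm_eq_abs, sq_abs,
    Real.sq_sqrt (hp _), Finset.mul_sum]
  exact Finset.sum_comm

theorem traceNorm_sum_smul_vecMulVec_le_s1 [DecidableEq k] (hp : ∀ i, 0 ≤ p i)
    (u : ι → m → ℂ) (v : ι → k → ℂ) :
    traceNorm (∑ i, (p i : ℂ) • vecMulVec (u i) (v i)) ≤
      √(∑ i, p i * ∑ a, ‖u i a‖ ^ 2) * √(∑ i, p i * ∑ b, ‖v i b‖ ^ 2) := by
  set A : Matrix m ι ℂ := of fun a i => (√(p i) : ℂ) * u i a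
  set B : Matrix k ι ℂ := of fun b i => (√(p i) : ℂ) * star (v i b)
  have hAB : ∑ i, (p i : ℂ) • vecMulVec (u i) (v i) = A * Bᴴ := by
    ext a b
    simp only [A, B, Matrix.sum_apply, Matrix.smul_apply, vecMulVec_apply, mul_apply,
      conjTranspose_apply, of_apply, star_mul', Complex.star_def, Complex.conj_conj,
      Complex.conj_ofReal, smul_eq_mul]
    refine Finset.sum_congr rfl fun i _ => ?_
    rw [mul_mul_mul_comm, ← Complex.ofReal_mul, Real.mul_self_sqrt (hp i)]
  have hB := sum_sum_norm_sqrt_mul_sq hp fun i b => star (v i b)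
  simp_rw [norm_star] at hB
  rw [hAB, ← sum_sum_norm_sqrt_mul_sq hp, ← hB]
  exact traceNorm_mul_conjTranspose_le A B

theorem traceNorm_sum_smul_vecMulVec_le_sqrt_mul [DecidableEq k] (hp : ∀ i, 0 ≤ p i)
    (hp1 : ∑ i, p i = 1) {u : ι → m → ℂ} {v : ι → k → ℂ} {α β : ℝ}
    (hu : ∀ i, ∑ a, ‖u i a‖ ^ 2 ≤ α) (hv : ∀ i, ∑ b, ‖v i b‖ ^ 2 ≤ β) :
    traceNorm (∑ i, (p i : ℂ) • vecMulVec (u i) (v i)) ≤ √(α * β) := by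
  have hmean : ∀ {f : ι → ℝ} {γ : ℝ}, (∀ i, f i ≤ γ) → ∑ i, p i * f i ≤ γ := fun hf =>
    calc _ ≤ ∑ i, p i * _ := Finset.sum_le_sum fun i _ => mul_le_mul_of_nonneg_left (hf i) (hp i)
      _ = _ := by rw [← Finset.sum_mul, hp1, one_mul]
  have hu0 : 0 ≤ ∑ i, p i * ∑ a, ‖u i a‖ ^ 2 :=
    Finset.sum_nonneg fun i _ => mul_nonneg (hp i) (by positivity)
  have hv0 : 0 ≤ ∑ i, p i * ∑ b, ‖v i b‖ ^ 2 :=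
    Finset.sum_nonneg fun i _ => mul_nonneg (hp i) (by positivity)
  refine (traceNorm_sum_smul_vecMulVec_le_s1 hp u v).trans ?_
  rw [← Real.sqrt_mul hu0]
  exact Real.sqrt_le_sqrt (mul_le_mul (hmean hu) (hmean hv) hv0 (hu0.trans (hmean hu)))

end RankOne

theorem Matrix.PosSemidef.norm_apply_sq_le {n : Type*} [Fintype n] {ρ : Matrix n n ℂ}
    (hρ : ρ.PosSemidef) (p q : n) : ‖ρ p q‖ ^ 2 ≤ (ρ p p).re * (ρ q q).re := by
  have hdet := (hρ.submatrix ![p, q]).det_nonneg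
  rw [det_fin_two] at hdet
  simp only [submatrix_apply, Matrix.cons_val_zero, Matrix.cons_val_one] at hdet
  rw [← hρ.1.apply q p, Complex.star_def, Complex.mul_conj] at hdet
  obtain ⟨-, hp⟩ := Complex.nonneg_iff.mp (hρ.diag_nonneg (i := p))
  obtain ⟨-, hq⟩ := Complex.nonneg_iff.mp (hρ.diag_nonneg (i := q))
  have h := (Complex.nonneg_iff.mp hdet).1
  simp only [Complex.sub_re, Complex.mul_re, ← hp, ← hq, mul_zero, sub_zero, Complex.ofReal_re,
    Complex.normSq_eq_norm_sq] at h
  linarith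

theorem Matrix.PosSemidef.sum_sum_norm_sq_le {n : Type*} [Fintype n] {ρ : Matrix n n ℂ}
    (hρ : ρ.PosSemidef) : ∑ p, ∑ q, ‖ρ p q‖ ^ 2 ≤ ρ.trace.re ^ 2 := by
  calc ∑ p, ∑ q, ‖ρ p q‖ ^ 2 ≤ ∑ p, ∑ q, (ρ p p).re * (ρ q q).re :=
        Finset.sum_le_sum fun p _ => Finset.sum_le_sum fun q _ => hρ.norm_apply_sq_le p q
    _ = ρ.trace.re ^ 2 := by
        rw [sq, ← Finset.sum_mul_sum, trace, Complex.re_sum]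
        rfl

section Bloch

variable {n K : Type*} [Fintype n]

/-- The coefficients `r̂` in `ρ = (I + ∑ᵢ r̂ᵢ Gᵢ) / d` when the `Gᵢ` span the traceless matrices. -/
noncomputable def blochVector (κ : ℝ) (G : K → Matrix n n ℂ) (ρ : Matrix n n ℂ) : K → ℂ :=
  fun i => (Fintype.card n / κ : ℂ) * ((G i)ᴴ * ρ).trace

theorem sum_norm_blochVector_sq_le [DecidableEq n] [Fintype K] [DecidableEq K] {κ : ℝ}
    (hκ : 0 < κ) {G : K → Matrix n n ℂ} (hGtr : ∀ i, (G i).trace = 0)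
    (hGorth : ∀ i j, ((G i)ᴴ * G j).trace = if i = j then (κ : ℂ) else 0)
    {ρ : Matrix n n ℂ} (hρ : ρ.PosSemidef) (htr : ρ.trace = 1) :
    ∑ i, ‖blochVector κ G ρ i‖ ^ 2 ≤ ((Fintype.card n : ℝ) ^ 2 - Fintype.card n) / κ := by
  set d : ℝ := (Fintype.card n : ℝ)
  have hd : 0 < d := by
    have : Nonempty n := by
      by_contra h
      rw [not_nonempty_iff] at h
      simp [trace] at htr
    exact Nat.cast_pos.mpr Fintype.card_pos
  set E : Option K → Matrix n n ℂ := fun o => o.elim 1 G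
  set c : Option K → ℝ := fun o => o.elim d fun _ => κ
  have hc : ∀ o ∈ Finset.univ, 0 < c o := by
    rintro (_ | i) -
    exacts [hd, hκ]
  have hE : ∀ o ∈ Finset.univ, ∀ o' ∈ Finset.univ,
      star (vec (E o)) ⬝ᵥ vec (E o') = if o = o' then (c o : ℂ) else 0 := by
    rintro (_ | i) - (_ | j) - <;> simp [E, c, d, star_vec_dotProduct_vec, hGtr, hGorth]
  have hbessel := sum_norm_star_dotProduct_sq_div_le hc hE (vec ρ)
  simp only [star_vec_dotProduct_vec, Fintype.sum_option, E, c, Option.elim, conjTranspose_one,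
    Matrix.one_mul, htr, norm_one, one_pow, one_div, ← Finset.sum_div] at hbessel
  have hpur : ∑ a, ‖vec ρ a‖ ^ 2 ≤ 1 := by
    rw [Fintype.sum_prod_type, Finset.sum_comm]
    simpa [vec, htr] using hρ.sum_sum_norm_sq_le
  have hsum : ∑ i, ‖((G i)ᴴ * ρ).trace‖ ^ 2 ≤ κ * (1 - d⁻¹) := by
    rw [← div_le_iff₀' hκ]
    linarith
  calc ∑ i, ‖blochVector κ G ρ i‖ ^ 2 = (d / κ) ^ 2 * ∑ i, ‖((G i)ᴴ * ρ).trace‖ ^ 2 := by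
        simp [blochVector, mul_pow, Finset.mul_sum, d, abs_of_pos hκ]
    _ ≤ (d / κ) ^ 2 * (κ * (1 - d⁻¹)) := by gcongr
    _ = (d ^ 2 - d) / κ := by field_simp

end Bloch

theorem trace_kronecker_conjTranspose_mul_kronecker {R a b : Type*} [CommRing R] [StarRing R]
    [Fintype a] [Fintype b] (P X : Matrix a a R) (Q Y : Matrix b b R) :
    ((P ⊗ₖ Q)ᴴ * (X ⊗ₖ Y)).trace = (Pᴴ * X).trace * (Qᴴ * Y).trace := by
  rw [conjTranspose_kronecker, ← mul_kronecker_mul, trace_kronecker]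

theorem trace_kronecker_conjTranspose_mul_sum_smul_kronecker {R a b ι : Type*} [CommRing R]
    [StarRing R] [Fintype a] [Fintype b] [Fintype ι] (P : Matrix a a R) (Q : Matrix b b R)
    (c : ι → R) (X : ι → Matrix a a R) (Y : ι → Matrix b b R) :
    ((P ⊗ₖ Q)ᴴ * ∑ k, c k • (X k ⊗ₖ Y k)).trace =
      ∑ k, c k * ((Pᴴ * X k).trace * (Qᴴ * Y k).trace) := by
  simp only [Matrix.mul_sum, Matrix.mul_smul, trace_sum, trace_smul, smul_eq_mul,
    trace_kronecker_conjTranspose_mul_kronecker]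

section Bipartite

variable {a b KA KB : Type*} [Fintype a] [Fintype b] [DecidableEq a] [DecidableEq b]
  [Fintype KA] [Fintype KB]
  {GA : KA → Matrix a a ℂ} {GB : KB → Matrix b b ℂ}

variable (GA GB) in
noncomputable def blochExpansion (r : KA → ℂ) (s : KB → ℂ) (T : Matrix KA KB ℂ) :
    Matrix (a × b) (a × b) ℂ :=
  1 + ∑ i, r i • (GA i ⊗ₖ (1 : Matrix b b ℂ)) + ∑ j, s j • ((1 : Matrix a a ℂ) ⊗ₖ GB j)
    + ∑ i, ∑ j, T i j • (GA i ⊗ₖ GB j)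

theorem trace_kronecker_conjTranspose_mul_blochExpansion_eq_sum (r : KA → ℂ) (s : KB → ℂ)
    (T : Matrix KA KB ℂ) (P : Matrix a a ℂ) (Q : Matrix b b ℂ) :
    ((P ⊗ₖ Q)ᴴ * blochExpansion GA GB r s T).trace =
      Pᴴ.trace * Qᴴ.trace + ∑ i, r i * ((Pᴴ * GA i).trace * Qᴴ.trace)
        + ∑ j, s j * (Pᴴ.trace * (Qᴴ * GB j).trace)
        + ∑ i, ∑ j, T i j * ((Pᴴ * GA i).trace * (Qᴴ * GB j).trace) := by
  rw [blochExpansion, ← one_kronecker_one]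
  simp only [Matrix.mul_add, Matrix.mul_sum, Matrix.mul_smul, trace_add, trace_sum, trace_smul,
    trace_kronecker_conjTranspose_mul_kronecker, Matrix.mul_one, smul_eq_mul]

theorem trace_kronecker_one_conjTranspose_mul_blochExpansion [DecidableEq KA] {κA : ℝ}
    (hGAtr : ∀ i, (GA i).trace = 0) (hGBtr : ∀ j, (GB j).trace = 0)
    (hGAorth : ∀ i j, ((GA i)ᴴ * GA j).trace = if i = j then (κA : ℂ) else 0)
    (r : KA → ℂ) (s : KB → ℂ) (T : Matrix KA KB ℂ) (i : KA) :
    ((GA i ⊗ₖ (1 : Matrix b b ℂ))ᴴ * blochExpansion GA GB r s T).trace =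
      κA * Fintype.card b * r i := by
  simp [trace_kronecker_conjTranspose_mul_blochExpansion_eq_sum, trace_conjTranspose, hGAtr, hGBtr,
    hGAorth, mul_comm]

theorem trace_one_kronecker_conjTranspose_mul_blochExpansion [DecidableEq KB] {κB : ℝ}
    (hGAtr : ∀ i, (GA i).trace = 0) (hGBtr : ∀ j, (GB j).trace = 0)
    (hGBorth : ∀ i j, ((GB i)ᴴ * GB j).trace = if i = j then (κB : ℂ) else 0)
    (r : KA → ℂ) (s : KB → ℂ) (T : Matrix KA KB ℂ) (j : KB) :
    (((1 : Matrix a a ℂ) ⊗ₖ GB j)ᴴ * blochExpansion GA GB r s T).trace =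
      κB * Fintype.card a * s j := by
  simp [trace_kronecker_conjTranspose_mul_blochExpansion_eq_sum, trace_conjTranspose, hGAtr, hGBtr,
    hGBorth, mul_comm]

theorem trace_kronecker_conjTranspose_mul_blochExpansion [DecidableEq KA] [DecidableEq KB]
    {κA κB : ℝ} (hGAtr : ∀ i, (GA i).trace = 0) (hGBtr : ∀ j, (GB j).trace = 0)
    (hGAorth : ∀ i j, ((GA i)ᴴ * GA j).trace = if i = j then (κA : ℂ) else 0)
    (hGBorth : ∀ i j, ((GB i)ᴴ * GB j).trace = if i = j then (κB : ℂ) else 0)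
    (r : KA → ℂ) (s : KB → ℂ) (T : Matrix KA KB ℂ) (i : KA) (j : KB) :
    ((GA i ⊗ₖ GB j)ᴴ * blochExpansion GA GB r s T).trace = κA * κB * T i j := by
  simp [trace_kronecker_conjTranspose_mul_blochExpansion_eq_sum, trace_conjTranspose, hGAtr, hGBtr,
    hGAorth, hGBorth, mul_comm]

theorem eq_sum_blochVector_of_sum_kronecker_eq [Nonempty a] [Nonempty b] [DecidableEq KA]
    [DecidableEq KB] {κA κB : ℝ} (hκA : κA ≠ 0) (hκB : κB ≠ 0)
    (hGAtr : ∀ i, (GA i).trace = 0) (hGBtr : ∀ j, (GB j).trace = 0)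
    (hGAorth : ∀ i j, ((GA i)ᴴ * GA j).trace = if i = j then (κA : ℂ) else 0)
    (hGBorth : ∀ i j, ((GB i)ᴴ * GB j).trace = if i = j then (κB : ℂ) else 0)
    {ι : Type*} [Fintype ι] {p : ι → ℝ} {ρA : ι → Matrix a a ℂ} {ρB : ι → Matrix b b ℂ}
    (htrA : ∀ k, (ρA k).trace = 1) (htrB : ∀ k, (ρB k).trace = 1)
    {r : KA → ℂ} {s : KB → ℂ} {T : Matrix KA KB ℂ}
    (hρ : ∑ k, (p k : ℂ) • (ρA k ⊗ₖ ρB k) =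
      ((Fintype.card a * Fintype.card b : ℂ))⁻¹ • blochExpansion GA GB r s T) :
    r = ∑ k, (p k : ℂ) • blochVector κA GA (ρA k) ∧
      s = ∑ k, (p k : ℂ) • blochVector κB GB (ρB k) ∧
      T = ∑ k, (p k : ℂ) • vecMulVec (blochVector κA GA (ρA k)) (blochVector κB GB (ρB k)) := by
  have key : ∀ P Q, ∑ k, (p k : ℂ) * ((Pᴴ * ρA k).trace * (Qᴴ * ρB k).trace) =
      ((Fintype.card a * Fintype.card b : ℂ))⁻¹ *
        ((P ⊗ₖ Q)ᴴ * blochExpansion GA GB r s T).trace := fun P Q => by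
    rw [← trace_kronecker_conjTranspose_mul_sum_smul_kronecker, hρ, Matrix.mul_smul, trace_smul,
      smul_eq_mul]
  have ha : (Fintype.card a : ℂ) ≠ 0 := Nat.cast_ne_zero.mpr Fintype.card_ne_zero
  have hb : (Fintype.card b : ℂ) ≠ 0 := Nat.cast_ne_zero.mpr Fintype.card_ne_zero
  have hκA' : (κA : ℂ) ≠ 0 := Complex.ofReal_ne_zero.mpr hκA
  have hκB' : (κB : ℂ) ≠ 0 := Complex.ofReal_ne_zero.mpr hκB
  refine ⟨funext fun i => ?_, funext fun j => ?_, ext fun i j => ?_⟩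
  · have h := key (GA i) 1
    rw [trace_kronecker_one_conjTranspose_mul_blochExpansion hGAtr hGBtr hGAorth] at h
    simp only [conjTranspose_one, one_mul, htrB, mul_one] at h
    simp only [blochVector, Finset.sum_apply, Pi.smul_apply, smul_eq_mul, mul_left_comm (p _ : ℂ),
      ← Finset.mul_sum, h]
    field_simp
  · have h := key 1 (GB j)
    rw [trace_one_kronecker_conjTranspose_mul_blochExpansion hGAtr hGBtr hGBorth] at h
    simp only [conjTranspose_one, one_mul, htrA] at h
    simp only [blochVector, Finset.sum_apply, Pi.smul_apply, smul_eq_mul, mul_left_comm (p _ : ℂ),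
      ← Finset.mul_sum, h]
    field_simp
  · have h := key (GA i) (GB j)
    rw [trace_kronecker_conjTranspose_mul_blochExpansion hGAtr hGBtr hGAorth hGBorth] at h
    simp only [blochVector, Matrix.sum_apply, Matrix.smul_apply, vecMulVec_apply, smul_eq_mul]
    calc T i j = Fintype.card a / κA * (Fintype.card b / κB) *
          ∑ k, (p k : ℂ) * (((GA i)ᴴ * ρA k).trace * ((GB j)ᴴ * ρB k).trace) := by
          rw [h]
          field_simp
      _ = _ := by
          rw [Finset.mul_sum]
          exact Finset.sum_congr rfl fun k _ => by ring

end Bipartite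

theorem sum_norm_elim_const_sq {m : Type*} [Fintype m] (n : ℕ) (x : ℝ) (u : m → ℂ) :
    ∑ c, ‖Sum.elim (fun _ : Fin n => (x : ℂ)) u c‖ ^ 2 = n * x ^ 2 + ∑ c, ‖u c‖ ^ 2 := by
  simp [Fintype.sum_sum_type]

theorem normExtCorrTensor_sum_smul {dA dB n : ℕ} {ι : Type*} [Fintype ι] (x y : ℝ)
    {p : ι → ℝ} (hp1 : ∑ k, p k = 1) (u : ι → Fin (dA ^ 2 - 1) → ℂ)
    (v : ι → Fin (dB ^ 2 - 1) → ℂ) :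
    normExtCorrTensor dA dB n x y (∑ k, (p k : ℂ) • u k) (∑ k, (p k : ℂ) • v k)
        (∑ k, (p k : ℂ) • vecMulVec (u k) (v k)) =
      ∑ k, (p k : ℂ) • vecMulVec (Sum.elim (fun _ => (x : ℂ)) (u k))
        (Sum.elim (fun _ => (y : ℂ)) (v k)) := by
  have hp1' : ∑ k, (p k : ℂ) = 1 := by exact_mod_cast hp1
  ext (i | i) (j | j)
  · simp [normExtCorrTensor, vecMulVec_apply, Matrix.sum_apply, ← Finset.sum_mul, hp1']
  all_goals simp [normExtCorrTensor, vecMulVec_apply, Matrix.sum_apply, Finset.mul_sum,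
    mul_left_comm, mul_comm]

theorem traceNorm_normExtCorrTensor_le_of_separable_general
    (dA dB : ℕ) (hdA : 2 ≤ dA) (hdB : 2 ≤ dB)
    (κA κB : ℝ) (hκA : 1 ≤ κA) (hκB : 1 ≤ κB)
    (GA : Fin (dA ^ 2 - 1) → Matrix (Fin dA) (Fin dA) ℂ)
    (GB : Fin (dB ^ 2 - 1) → Matrix (Fin dB) (Fin dB) ℂ)
    (hGAtr : ∀ i, (GA i).trace = 0)
    (hGBtr : ∀ j, (GB j).trace = 0)
    (hGAorth : ∀ i j, ((GA i)ᴴ * GA j).trace = if i = j then (κA : ℂ) else 0)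
    (hGBorth : ∀ i j, ((GB i)ᴴ * GB j).trace = if i = j then (κB : ℂ) else 0)
    (ρ : Matrix (Fin dA × Fin dB) (Fin dA × Fin dB) ℂ)
    (hsep : IsSeparableState dA dB ρ)
    (r : Fin (dA ^ 2 - 1) → ℂ) (s : Fin (dB ^ 2 - 1) → ℂ)
    (T : Matrix (Fin (dA ^ 2 - 1)) (Fin (dB ^ 2 - 1)) ℂ)
    (hexp : ρ = ((dA * dB : ℂ))⁻¹ •
      ((1 : Matrix (Fin dA × Fin dB) (Fin dA × Fin dB) ℂ)
        + ∑ i, r i • (GA i ⊗ₖ (1 : Matrix (Fin dB) (Fin dB) ℂ))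
        + ∑ j, s j • ((1 : Matrix (Fin dA) (Fin dA) ℂ) ⊗ₖ GB j)
        + ∑ i, ∑ j, T i j • (GA i ⊗ₖ GB j)))
    (x y : ℝ) (n : ℕ) :
    traceNorm (normExtCorrTensor dA dB n x y r s T) ≤
      Real.sqrt ((n * x ^ 2 + ((dA : ℝ) ^ 2 - dA) / κA) *
        (n * y ^ 2 + ((dB : ℝ) ^ 2 - dB) / κB)) := by
  obtain ⟨N, p, ρA, ρB, hp0, hp1, hρA, hρB, rfl⟩ := hsep
  have : Nonempty (Fin dA) := ⟨⟨0, by omega⟩⟩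
  have : Nonempty (Fin dB) := ⟨⟨0, by omega⟩⟩
  obtain ⟨rfl, rfl, rfl⟩ := eq_sum_blochVector_of_sum_kronecker_eq (by positivity) (by positivity)
    hGAtr hGBtr hGAorth hGBorth (fun k => (hρA k).2) (fun k => (hρB k).2)
    (by rw [Fintype.card_fin, Fintype.card_fin]; exact hexp)
  rw [normExtCorrTensor_sum_smul x y hp1]
  refine traceNorm_sum_smul_vecMulVec_le_sqrt_mul hp0 hp1 (fun k => ?_) (fun k => ?_)
  · have h := sum_norm_blochVector_sq_le (by positivity) hGAtr hGAorth (hρA k).1 (hρA k).2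
    rw [Fintype.card_fin] at h
    rw [sum_norm_elim_const_sq]
    linarith
  · have h := sum_norm_blochVector_sq_le (by positivity) hGBtr hGBorth (hρB k).1 (hρB k).2
    rw [Fintype.card_fin] at h
    rw [sum_norm_elim_const_sq]
    linarith

/-- **Proposition**: for a separable bipartite density matrix the trace norm of the normalized
extended correlation tensor is bounded by
`√((n x² + (d_A² − d_A)/κ_A)(n y² + (d_B² − d_B)/κ_B))`. -/
theorem traceNorm_normExtCorrTensor_le_of_separable
    (dA dB : ℕ) (hdA : 2 ≤ dA) (hdB : 2 ≤ dB)
    (κA κB : ℝ) (hκA : 1 ≤ κA) (hκB : 1 ≤ κB)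
    (GA : Fin (dA ^ 2 - 1) → Matrix (Fin dA) (Fin dA) ℂ)
    (GB : Fin (dB ^ 2 - 1) → Matrix (Fin dB) (Fin dB) ℂ)
    (hGAtr : ∀ i, (GA i).trace = 0)
    (hGBtr : ∀ j, (GB j).trace = 0)
    (hGAorth : ∀ i j, ((GA i)ᴴ * GA j).trace = if i = j then (κA : ℂ) else 0)
    (hGBorth : ∀ i j, ((GB i)ᴴ * GB j).trace = if i = j then (κB : ℂ) else 0)
    (hGAspan : ∀ X : Matrix (Fin dA) (Fin dA) ℂ, X.trace = 0 →
      X ∈ Submodule.span ℂ (Set.range GA))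
    (hGBspan : ∀ X : Matrix (Fin dB) (Fin dB) ℂ, X.trace = 0 →
      X ∈ Submodule.span ℂ (Set.range GB))
    (ρ : Matrix (Fin dA × Fin dB) (Fin dA × Fin dB) ℂ)
    (hρ : IsDensityMatrix ρ)
    (hsep : IsSeparableState dA dB ρ)
    (r : Fin (dA ^ 2 - 1) → ℂ) (s : Fin (dB ^ 2 - 1) → ℂ)
    (T : Matrix (Fin (dA ^ 2 - 1)) (Fin (dB ^ 2 - 1)) ℂ)
    (hexp : ρ = ((dA * dB : ℂ))⁻¹ •
      ((1 : Matrix (Fin dA × Fin dB) (Fin dA × Fin dB) ℂ)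
        + ∑ i, r i • (GA i ⊗ₖ (1 : Matrix (Fin dB) (Fin dB) ℂ))
        + ∑ j, s j • ((1 : Matrix (Fin dA) (Fin dA) ℂ) ⊗ₖ GB j)
        + ∑ i, ∑ j, T i j • (GA i ⊗ₖ GB j)))
    (x y : ℝ) (hx : 0 ≤ x) (hy : 0 ≤ y) (n : ℕ) (hn : 0 < n) :
    traceNorm (normExtCorrTensor dA dB n x y r s T) ≤
      Real.sqrt ((n * x ^ 2 + ((dA : ℝ) ^ 2 - dA) / κA) *
        (n * y ^ 2 + ((dB : ℝ) ^ 2 - dB) / κB)) :=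
  traceNorm_normExtCorrTensor_le_of_separable_general dA dB hdA hdB κA κB hκA hκB GA GB hGAtr hGBtr
    hGAorth hGBorth ρ hsep r s T hexp x y n
end

section
/- Let ρ be a separable bipartite density matrix on ℂ^{d_A}⊗ℂ^{d_B}, and take the generalized Gell-Mann matrices (so κ_A = κ_B = 2) as the traceless orthogonal bases. Then for all real x, y ≥ 0 and every positive integer n, the normalized extended correlation tensor satisfies ‖M̂_{x,y}^{(n)}‖_tr ≤ (1/2) √( (2n x² + d_A² − d_A)(2n y² + d_B² − d_B) ). -/
open Matrix BigOperators Kronecker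
open scoped ComplexOrder

/-!
Write the separable state as `ρ = ∑ₖ pₖ ρAₖ ⊗ ρBₖ`. Pairing `ρ` with the probes `λᵢ ⊗ I`,
`I ⊗ λⱼ` and `λᵢ ⊗ λⱼ` in both descriptions of `ρ` gives `M̂ = ∑ₖ pₖ aₖ bₖᵀ`, where
`aₖ = (x, …, x, (d_A/2) tr(ρAₖ λᵢ))` is the extended Bloch vector of `ρAₖ` (and `bₖ` that of
`ρBₖ`). The trace norm of such a sum is at most `∑ₖ pₖ ‖aₖ‖ ‖bₖ‖`: it equals `∑ᵢ ‖M̂ wᵢ‖` for an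
eigenbasis `(wᵢ)` of `M̂ᴴM̂`, the vectors `M̂ wᵢ` are orthogonal, and Cauchy–Schwarz with Bessel's
inequality for `(wᵢ)` and for the normalized `M̂ wᵢ` bounds each term. Bessel's inequality for
the Hilbert–Schmidt orthonormal family `λᵢ/√2`, applied to `ρAₖ − I/d_A` together with
`tr ρAₖ² ≤ 1`, gives `‖aₖ‖² ≤ n x² + (d_A² − d_A)/2`.
-/

theorem Real.sqrt_div_mul_sqrt_div {u c : ℝ} (hu : 0 ≤ u) (hc : 0 ≤ c) (v : ℝ) :
    √(u / c) * √(v / c) = √(u * v) / c := by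
  rw [← Real.sqrt_mul (div_nonneg hu hc), div_mul_div_comm, Real.sqrt_div' _ (mul_nonneg hc hc),
    Real.sqrt_mul_self hc]

theorem Matrix.PosSemidef.re_trace_mul_self_le {𝕜 n : Type*} [RCLike 𝕜] [Fintype n]
    [DecidableEq n] {A : Matrix n n 𝕜} (hA : A.PosSemidef) :
    RCLike.re (A * A).trace ≤ RCLike.re A.trace ^ 2 := by
  set U := hA.1.eigenvectorUnitary
  set D : Matrix n n 𝕜 := diagonal (RCLike.ofReal ∘ hA.1.eigenvalues)
  have hsq : A * A = Unitary.conjStarAlgAut 𝕜 _ U (D * D) := by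
    rw [map_mul, ← hA.1.spectral_theorem]
  have htr : (Unitary.conjStarAlgAut 𝕜 _ U (D * D)).trace = (D * D).trace := by
    rw [Unitary.conjStarAlgAut_apply, trace_mul_cycle, Unitary.coe_star_mul_self, one_mul]
  rw [hsq, htr, hA.1.trace_eq_sum_eigenvalues, diagonal_mul_diagonal, trace_diagonal]
  simp only [Function.comp_apply, ← RCLike.ofReal_mul, ← RCLike.ofReal_sum, RCLike.ofReal_re]
  simpa only [sq] using Finset.sum_sq_le_sq_sum_of_nonneg fun i _ => hA.eigenvalues_nonneg i

section HilbertSchmidt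

variable {𝕜 m n : Type*} [RCLike 𝕜] [Fintype m] [Fintype n]

theorem Matrix.inner_toLp_vec (A B : Matrix m n 𝕜) :
    inner 𝕜 (WithLp.toLp 2 A.vec) (WithLp.toLp 2 B.vec) = (Aᴴ * B).trace := by
  rw [EuclideanSpace.inner_toLp_toLp, dotProduct_comm, star_vec_dotProduct_vec]

theorem Matrix.norm_toLp_vec_sq (A : Matrix m n 𝕜) :
    ‖WithLp.toLp 2 A.vec‖ ^ 2 = RCLike.re (Aᴴ * A).trace := by
  rw [@norm_sq_eq_re_inner 𝕜, inner_toLp_vec]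

theorem Matrix.PosSemidef.norm_toLp_vec_sub_smul_one_sq_le [DecidableEq n] {ρ : Matrix n n 𝕜}
    (hρ : ρ.PosSemidef) (hρtr : ρ.trace = 1) :
    ‖WithLp.toLp 2 (ρ - (Fintype.card n : 𝕜)⁻¹ • 1).vec‖ ^ 2 ≤ 1 - (Fintype.card n : ℝ)⁻¹ := by
  have htr : ((ρ - (Fintype.card n : 𝕜)⁻¹ • 1)ᴴ * (ρ - (Fintype.card n : 𝕜)⁻¹ • 1)).trace =
      (ρ * ρ).trace - (Fintype.card n : 𝕜)⁻¹ := by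
    simp only [conjTranspose_sub, conjTranspose_smul, conjTranspose_one, hρ.1.eq, star_inv₀,
      star_natCast, sub_mul, mul_sub, smul_mul, Matrix.mul_smul, one_mul, mul_one, trace_sub,
      trace_smul, trace_one, hρtr, smul_eq_mul]
    rcases eq_or_ne (Fintype.card n : 𝕜) 0 with h | h
    · simp [h]
    · field_simp
      ring
  have hpure := hρ.re_trace_mul_self_le
  rw [hρtr, RCLike.one_re, one_pow] at hpure
  rw [norm_toLp_vec_sq, htr, map_sub, ← RCLike.ofReal_natCast, ← RCLike.ofReal_inv,
    RCLike.ofReal_re]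
  linarith

theorem sum_norm_trace_mul_sq_le [DecidableEq n] {ι : Type*} [Fintype ι] [DecidableEq ι]
    {l : ι → Matrix n n 𝕜} {κ : ℝ} (hκ : 0 < κ) (hherm : ∀ i, (l i).IsHermitian)
    (htr : ∀ i, (l i).trace = 0)
    (horth : ∀ i j, (l i * l j).trace = if i = j then (κ : 𝕜) else 0)
    {ρ : Matrix n n 𝕜} (hρ : ρ.PosSemidef) (hρtr : ρ.trace = 1) :
    ∑ i, ‖(ρ * l i).trace‖ ^ 2 ≤ κ * (1 - (Fintype.card n : ℝ)⁻¹) := by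
  set e : ι → EuclideanSpace 𝕜 (n × n) := fun i => ((√κ : 𝕜))⁻¹ • WithLp.toLp 2 (l i).vec
  have he : Orthonormal 𝕜 e := by
    rw [orthonormal_iff_ite]
    intro i j
    simp only [e, inner_smul_left, inner_smul_right, inner_toLp_vec, (hherm i).eq, horth]
    split_ifs
    · rw [map_inv₀, RCLike.conj_ofReal, ← mul_assoc, ← mul_inv, ← RCLike.ofReal_mul,
        Real.mul_self_sqrt hκ.le, inv_mul_cancel₀ (by exact_mod_cast hκ.ne')]
    · simp
  set Δ : Matrix n n 𝕜 := ρ - (Fintype.card n : 𝕜)⁻¹ • 1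
  have hcoef : ∀ i, inner 𝕜 (e i) (WithLp.toLp 2 Δ.vec) = ((√κ : 𝕜))⁻¹ * (ρ * l i).trace := by
    intro i
    simp only [e, Δ, inner_smul_left, vec_sub, vec_smul, WithLp.toLp_sub, WithLp.toLp_smul,
      inner_sub_right, inner_smul_right, inner_toLp_vec, (hherm i).eq, mul_one, htr, mul_zero,
      sub_zero, map_inv₀, RCLike.conj_ofReal, trace_mul_comm (l i)]
  have hbessel := he.sum_inner_products_le (s := Finset.univ) (WithLp.toLp 2 Δ.vec)
  simp only [hcoef, norm_mul, norm_inv, RCLike.norm_ofReal, mul_pow, inv_pow,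
    abs_of_nonneg (Real.sqrt_nonneg κ), Real.sq_sqrt hκ.le, ← Finset.mul_sum] at hbessel
  rw [inv_mul_le_iff₀ hκ] at hbessel
  linarith [mul_le_mul_of_nonneg_left (hρ.norm_toLp_vec_sub_smul_one_sq_le hρtr) hκ.le]

end HilbertSchmidt

section InnerProductSpace

variable {𝕜 E F ι τ : Type*} [RCLike 𝕜] [NormedAddCommGroup E] [InnerProductSpace 𝕜 E]
  [NormedAddCommGroup F] [InnerProductSpace 𝕜 F] [Fintype ι] [Fintype τ]

local notation "⟪" x ", " y "⟫" => inner 𝕜 x y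

theorem sum_norm_inner_normalize_sq_le {g : ι → E} (hg : Pairwise fun i j => ⟪g i, g j⟫ = 0)
    (x : E) : ∑ i, ‖⟪(‖g i‖⁻¹ : 𝕜) • g i, x⟫‖ ^ 2 ≤ ‖x‖ ^ 2 := by
  classical
  have hon : Orthonormal 𝕜 fun i : {i // g i ≠ 0} => (‖g i‖⁻¹ : 𝕜) • g i := by
    refine ⟨fun i => norm_smul_inv_norm i.2, fun i j hij => ?_⟩
    simp only [inner_smul_left, inner_smul_right, hg (Subtype.coe_ne_coe.mpr hij), mul_zero]
  calc ∑ i, ‖⟪(‖g i‖⁻¹ : 𝕜) • g i, x⟫‖ ^ 2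
      = ∑ i : {i // g i ≠ 0}, ‖⟪(‖g i‖⁻¹ : 𝕜) • g i, x⟫‖ ^ 2 := by
        rw [← Finset.sum_filter_of_ne (p := fun i => g i ≠ 0),
          Finset.sum_subtype (p := fun i => g i ≠ 0) _ (by simp)]
        intro i _ hi hgi
        simp [hgi] at hi
    _ ≤ ‖x‖ ^ 2 := hon.sum_inner_products_le x

theorem sum_norm_le_sum_norm_mul_norm_of_orthogonal {w : ι → F} (hw : Orthonormal 𝕜 w)
    {g : ι → E} (hg : Pairwise fun i j => ⟪g i, g j⟫ = 0) (a : τ → E) (b : τ → F)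
    (hgab : ∀ i, g i = ∑ t, ⟪b t, w i⟫ • a t) :
    ∑ i, ‖g i‖ ≤ ∑ t, ‖a t‖ * ‖b t‖ := by
  set z : ι → E := fun i => (‖g i‖⁻¹ : 𝕜) • g i
  have hg_le : ∀ i, ‖g i‖ ≤ ∑ t, ‖⟪w i, b t⟫‖ * ‖⟪z i, a t⟫‖ := by
    intro i
    have hz : ⟪z i, g i⟫ = ‖g i‖ := by
      rcases eq_or_ne (g i) 0 with h | h
      · simp [z, h]
      · rw [inner_smul_left, inner_self_eq_norm_sq_to_K, map_inv₀, RCLike.conj_ofReal]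
        field_simp
    calc ‖g i‖ = ‖⟪z i, g i⟫‖ := by rw [hz, RCLike.norm_ofReal, abs_norm]
      _ = ‖∑ t, ⟪b t, w i⟫ * ⟪z i, a t⟫‖ := by
        rw [hgab i, inner_sum]; simp only [inner_smul_right]
      _ ≤ ∑ t, ‖⟪w i, b t⟫‖ * ‖⟪z i, a t⟫‖ := by
        refine (norm_sum_le _ _).trans_eq (Finset.sum_congr rfl fun t _ => ?_)
        rw [norm_mul, ← norm_inner_symm]
  have hbessel_w : ∀ t, √(∑ i, ‖⟪w i, b t⟫‖ ^ 2) ≤ ‖b t‖ := fun t =>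
    Real.sqrt_le_iff.mpr ⟨norm_nonneg _, hw.sum_inner_products_le _⟩
  have hbessel_z : ∀ t, √(∑ i, ‖⟪z i, a t⟫‖ ^ 2) ≤ ‖a t‖ := fun t =>
    Real.sqrt_le_iff.mpr ⟨norm_nonneg _, sum_norm_inner_normalize_sq_le hg _⟩
  calc ∑ i, ‖g i‖ ≤ ∑ i, ∑ t, ‖⟪w i, b t⟫‖ * ‖⟪z i, a t⟫‖ := Finset.sum_le_sum fun i _ => hg_le i
    _ = ∑ t, ∑ i, ‖⟪w i, b t⟫‖ * ‖⟪z i, a t⟫‖ := Finset.sum_comm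
    _ ≤ ∑ t, √(∑ i, ‖⟪w i, b t⟫‖ ^ 2) * √(∑ i, ‖⟪z i, a t⟫‖ ^ 2) :=
      Finset.sum_le_sum fun t _ => Real.sum_mul_le_sqrt_mul_sqrt _ _ _
    _ ≤ ∑ t, ‖a t‖ * ‖b t‖ := Finset.sum_le_sum fun t _ => by
      rw [mul_comm ‖a t‖]
      exact mul_le_mul (hbessel_w t) (hbessel_z t) (Real.sqrt_nonneg _) (norm_nonneg _)

end InnerProductSpace

section TraceNorm

variable {m k τ : Type*} [Fintype m] [Fintype k] [DecidableEq k] [Fintype τ]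

local notation "⟪" x ", " y "⟫" => inner ℂ x y

theorem inner_toLp_mulVec_eigenvectorBasis (X : Matrix m k ℂ) (i j : k) :
    ⟪WithLp.toLp 2 (X *ᵥ (isHermitian_conjTranspose_mul_self X).eigenvectorBasis i),
      WithLp.toLp 2 (X *ᵥ (isHermitian_conjTranspose_mul_self X).eigenvectorBasis j)⟫ =
      (isHermitian_conjTranspose_mul_self X).eigenvalues j *
        ⟪(isHermitian_conjTranspose_mul_self X).eigenvectorBasis i,
          (isHermitian_conjTranspose_mul_self X).eigenvectorBasis j⟫ := by
  set hH := isHermitian_conjTranspose_mul_self X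
  rw [EuclideanSpace.inner_toLp_toLp, EuclideanSpace.inner_eq_star_dotProduct, dotProduct_comm,
    Matrix.star_mulVec, ← dotProduct_mulVec, mulVec_mulVec, hH.mulVec_eigenvectorBasis j,
    dotProduct_smul, dotProduct_comm, RCLike.real_smul_eq_coe_smul (K := ℂ), smul_eq_mul]
  rfl

theorem traceNorm_eq_sum_norm_mulVec_eigenvectorBasis (X : Matrix m k ℂ) :
    traceNorm X = ∑ i, ‖WithLp.toLp 2
      (X *ᵥ (isHermitian_conjTranspose_mul_self X).eigenvectorBasis i)‖ := by
  refine Finset.sum_congr rfl fun i _ => ?_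
  rw [← Real.sqrt_sq (norm_nonneg _), @norm_sq_eq_re_inner ℂ, inner_toLp_mulVec_eigenvectorBasis,
    inner_self_eq_norm_sq_to_K, (isHermitian_conjTranspose_mul_self X).eigenvectorBasis.norm_eq_one]
  simp

theorem traceNorm_sum_vecMulVec_le_s8 (a : τ → m → ℂ) (b : τ → k → ℂ) :
    traceNorm (∑ t, vecMulVec (a t) (b t)) ≤
      ∑ t, ‖WithLp.toLp 2 (a t)‖ * ‖WithLp.toLp 2 (b t)‖ := by
  set X := ∑ t, vecMulVec (a t) (b t)
  set w := (isHermitian_conjTranspose_mul_self X).eigenvectorBasis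
  have hb : ∀ t, ‖WithLp.toLp 2 (b t)‖ = ‖WithLp.toLp 2 (star (b t))‖ := fun t => by
    simp [EuclideanSpace.norm_eq]
  simp only [hb]
  rw [traceNorm_eq_sum_norm_mulVec_eigenvectorBasis]
  -- `b ⬝ᵥ v = ⟪star b, v⟫`, so `X *ᵥ v = ∑ₜ ⟪star (b t), v⟫ • a t`.
  refine sum_norm_le_sum_norm_mul_norm_of_orthogonal w.orthonormal (fun i j hij => ?_) _ _
    fun i => ?_
  · dsimp only
    rw [inner_toLp_mulVec_eigenvectorBasis, w.orthonormal.2 hij, mul_zero]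
  · simp only [X, sum_mulVec, vecMulVec_mulVec, op_smul_eq_smul, WithLp.toLp_sum, WithLp.toLp_smul,
      EuclideanSpace.inner_eq_star_dotProduct]
    exact Finset.sum_congr rfl fun t _ => by rw [star_star, dotProduct_comm]

end TraceNorm

section CorrelationExpansion

variable {mA mB ιA ιB : Type*} [Fintype mA] [Fintype mB] [Fintype ιA] [Fintype ιB]

theorem trace_sum_smul_kronecker_mul_kronecker {τ : Type*} [Fintype τ] (p : τ → ℂ)
    (ρA : τ → Matrix mA mA ℂ) (ρB : τ → Matrix mB mB ℂ) (P : Matrix mA mA ℂ)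
    (Q : Matrix mB mB ℂ) :
    ((∑ k, p k • (ρA k ⊗ₖ ρB k)) * (P ⊗ₖ Q)).trace =
      ∑ k, p k * ((ρA k * P).trace * (ρB k * Q).trace) := by
  simp only [Finset.sum_mul, trace_sum, smul_mul, trace_smul, ← mul_kronecker_mul, trace_kronecker,
    smul_eq_mul]

variable [DecidableEq mA] [DecidableEq mB]

def correlationExpansion (lA : ιA → Matrix mA mA ℂ) (lB : ιB → Matrix mB mB ℂ) (r : ιA → ℂ)
    (s : ιB → ℂ) (T : Matrix ιA ιB ℂ) : Matrix (mA × mB) (mA × mB) ℂ :=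
  1 + ∑ i, r i • (lA i ⊗ₖ (1 : Matrix mB mB ℂ)) + ∑ j, s j • ((1 : Matrix mA mA ℂ) ⊗ₖ lB j)
    + ∑ i, ∑ j, T i j • (lA i ⊗ₖ lB j)

theorem trace_correlationExpansion_mul_kronecker (lA : ιA → Matrix mA mA ℂ)
    (lB : ιB → Matrix mB mB ℂ) (r : ιA → ℂ) (s : ιB → ℂ) (T : Matrix ιA ιB ℂ)
    (P : Matrix mA mA ℂ) (Q : Matrix mB mB ℂ) :
    (correlationExpansion lA lB r s T * (P ⊗ₖ Q)).trace = P.trace * Q.trace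
      + ∑ i, r i * ((lA i * P).trace * Q.trace) + ∑ j, s j * (P.trace * (lB j * Q).trace)
      + ∑ i, ∑ j, T i j * ((lA i * P).trace * (lB j * Q).trace) := by
  simp only [correlationExpansion, add_mul, trace_add, Finset.sum_mul, trace_sum, smul_mul,
    trace_smul, ← mul_kronecker_mul, trace_kronecker, Matrix.one_mul, smul_eq_mul]

variable {lA : ιA → Matrix mA mA ℂ} {lB : ιB → Matrix mB mB ℂ} {κA κB : ℂ}

theorem trace_correlationExpansion_mul_kronecker_one [DecidableEq ιA]
    (htrA : ∀ i, (lA i).trace = 0) (htrB : ∀ j, (lB j).trace = 0)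
    (horthA : ∀ i j, (lA i * lA j).trace = if i = j then κA else 0)
    (r : ιA → ℂ) (s : ιB → ℂ) (T : Matrix ιA ιB ℂ) (i : ιA) :
    (correlationExpansion lA lB r s T * (lA i ⊗ₖ 1)).trace = r i * (κA * Fintype.card mB) := by
  simp [trace_correlationExpansion_mul_kronecker, htrA, htrB, horthA]

theorem trace_correlationExpansion_mul_one_kronecker [DecidableEq ιB]
    (htrA : ∀ i, (lA i).trace = 0) (htrB : ∀ j, (lB j).trace = 0)
    (horthB : ∀ i j, (lB i * lB j).trace = if i = j then κB else 0)
    (r : ιA → ℂ) (s : ιB → ℂ) (T : Matrix ιA ιB ℂ) (j : ιB) :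
    (correlationExpansion lA lB r s T * (1 ⊗ₖ lB j)).trace = s j * (Fintype.card mA * κB) := by
  simp [trace_correlationExpansion_mul_kronecker, htrA, htrB, horthB]

theorem trace_correlationExpansion_mul_kronecker_kronecker [DecidableEq ιA] [DecidableEq ιB]
    (htrA : ∀ i, (lA i).trace = 0) (htrB : ∀ j, (lB j).trace = 0)
    (horthA : ∀ i j, (lA i * lA j).trace = if i = j then κA else 0)
    (horthB : ∀ i j, (lB i * lB j).trace = if i = j then κB else 0)
    (r : ιA → ℂ) (s : ιB → ℂ) (T : Matrix ιA ιB ℂ) (i : ιA) (j : ιB) :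
    (correlationExpansion lA lB r s T * (lA i ⊗ₖ lB j)).trace = T i j * (κA * κB) := by
  simp [trace_correlationExpansion_mul_kronecker, htrA, htrB, horthA, horthB]

end CorrelationExpansion

noncomputable def extBlochVector {m ι : Type*} [Fintype m] (n : ℕ) (x κ : ℝ)
    (l : ι → Matrix m m ℂ) (σ : Matrix m m ℂ) : Fin n ⊕ ι → ℂ :=
  Sum.elim (fun _ => (x : ℂ)) fun i => Fintype.card m / κ * (σ * l i).trace

theorem normExtCorrTensor_eq_sum_vecMulVec {dA dB n N : ℕ} (hdA : dA ≠ 0) (hdB : dB ≠ 0)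
    {lA : Fin (dA ^ 2 - 1) → Matrix (Fin dA) (Fin dA) ℂ}
    {lB : Fin (dB ^ 2 - 1) → Matrix (Fin dB) (Fin dB) ℂ} {κA κB : ℝ} (hκA : κA ≠ 0)
    (hκB : κB ≠ 0) (htrA : ∀ i, (lA i).trace = 0) (htrB : ∀ j, (lB j).trace = 0)
    (horthA : ∀ i j, (lA i * lA j).trace = if i = j then (κA : ℂ) else 0)
    (horthB : ∀ i j, (lB i * lB j).trace = if i = j then (κB : ℂ) else 0)
    {p : Fin N → ℝ} (hp : ∑ k, p k = 1) {ρA : Fin N → Matrix (Fin dA) (Fin dA) ℂ}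
    {ρB : Fin N → Matrix (Fin dB) (Fin dB) ℂ} (hρA : ∀ k, (ρA k).trace = 1)
    (hρB : ∀ k, (ρB k).trace = 1) {r : Fin (dA ^ 2 - 1) → ℂ} {s : Fin (dB ^ 2 - 1) → ℂ}
    {T : Matrix (Fin (dA ^ 2 - 1)) (Fin (dB ^ 2 - 1)) ℂ}
    (hexp : ∑ k, (p k : ℂ) • (ρA k ⊗ₖ ρB k) =
      ((dA * dB : ℂ))⁻¹ • correlationExpansion lA lB r s T) (x y : ℝ) :
    normExtCorrTensor dA dB n x y r s T =
      ∑ k, vecMulVec ((p k : ℂ) • extBlochVector n x κA lA (ρA k))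
        (extBlochVector n y κB lB (ρB k)) := by
  have hprobe : ∀ P Q, ((dA * dB : ℂ))⁻¹ * (correlationExpansion lA lB r s T * (P ⊗ₖ Q)).trace =
      ∑ k, (p k : ℂ) * ((ρA k * P).trace * (ρB k * Q).trace) := fun P Q => by
    rw [← trace_sum_smul_kronecker_mul_kronecker, hexp, smul_mul, trace_smul, smul_eq_mul]
  have hr : ∀ i, r i = dA / κA * ∑ k, (p k : ℂ) * (ρA k * lA i).trace := fun i => by
    have := hprobe (lA i) 1
    rw [trace_correlationExpansion_mul_kronecker_one htrA htrB horthA] at this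
    simp only [hρB, mul_one, Fintype.card_fin] at this
    rw [← this]
    field_simp
  have hs : ∀ j, s j = dB / κB * ∑ k, (p k : ℂ) * (ρB k * lB j).trace := fun j => by
    have := hprobe 1 (lB j)
    rw [trace_correlationExpansion_mul_one_kronecker htrA htrB horthB] at this
    simp only [Matrix.mul_one, hρA, one_mul, Fintype.card_fin] at this
    rw [← this]
    field_simp
  have hT : ∀ i j, T i j = dA * dB / (κA * κB) *
      ∑ k, (p k : ℂ) * ((ρA k * lA i).trace * (ρB k * lB j).trace) := fun i j => by
    have := hprobe (lA i) (lB j)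
    rw [trace_correlationExpansion_mul_kronecker_kronecker htrA htrB horthA horthB] at this
    rw [← this]
    field_simp
  have hp' : ∑ k, (p k : ℂ) = 1 := by exact_mod_cast hp
  ext (i | i) (j | j) <;>
    simp only [normExtCorrTensor, extBlochVector, Matrix.sum_apply, vecMulVec_apply, Pi.smul_apply,
      fromBlocks_apply₁₁, fromBlocks_apply₁₂, fromBlocks_apply₂₁, fromBlocks_apply₂₂, of_apply,
      Sum.elim_inl, Sum.elim_inr, smul_eq_mul, hr, hs, hT, Finset.mul_sum, Fintype.card_fin]
  · rw [← Finset.sum_mul, ← Finset.sum_mul, hp']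
    push_cast
    ring
  all_goals exact Finset.sum_congr rfl fun k _ => by ring

theorem norm_toLp_extBlochVector_le {m ι : Type*} [Fintype m] [DecidableEq m] [Fintype ι]
    [DecidableEq ι] (n : ℕ) (x : ℝ) {κ : ℝ} (hκ : 0 < κ) {l : ι → Matrix m m ℂ}
    (hherm : ∀ i, (l i).IsHermitian) (htr : ∀ i, (l i).trace = 0)
    (horth : ∀ i j, (l i * l j).trace = if i = j then (κ : ℂ) else 0)
    {σ : Matrix m m ℂ} (hσ : σ.PosSemidef) (hσtr : σ.trace = 1) :
    ‖WithLp.toLp 2 (extBlochVector n x κ l σ)‖ ≤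
      √((κ * n * x ^ 2 + (Fintype.card m : ℝ) ^ 2 - Fintype.card m) / κ) := by
  refine Real.le_sqrt_of_sq_le ?_
  have hbloch := sum_norm_trace_mul_sq_le hκ hherm htr horth hσ hσtr
  rw [EuclideanSpace.norm_sq_eq, Fintype.sum_sum_type]
  simp only [extBlochVector, Sum.elim_inl, Sum.elim_inr, Complex.norm_real, norm_mul, norm_div,
    Complex.norm_natCast, Real.norm_eq_abs, sq_abs, mul_pow, div_pow, Finset.sum_const,
    Finset.card_univ, Fintype.card_fin, nsmul_eq_mul, ← Finset.mul_sum]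
  have hcard : (Fintype.card m : ℝ) ^ 2 * (1 - (Fintype.card m : ℝ)⁻¹) =
      (Fintype.card m : ℝ) ^ 2 - Fintype.card m := by
    rcases eq_or_ne (Fintype.card m : ℝ) 0 with h | h
    · simp [h]
    · field_simp
  calc _ ≤ n * x ^ 2 + (Fintype.card m : ℝ) ^ 2 / κ ^ 2 * (κ * (1 - (Fintype.card m : ℝ)⁻¹)) := by
        gcongr
    _ = _ := by
      rw [add_sub_assoc, ← hcard]
      field_simp

theorem traceNorm_normExtCorrTensor_le_of_separable_gellMann_general
    (dA dB : ℕ) (hdA : 2 ≤ dA) (hdB : 2 ≤ dB)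
    (lA : Fin (dA ^ 2 - 1) → Matrix (Fin dA) (Fin dA) ℂ)
    (lB : Fin (dB ^ 2 - 1) → Matrix (Fin dB) (Fin dB) ℂ)
    (hlAherm : ∀ i, (lA i).IsHermitian)
    (hlBherm : ∀ j, (lB j).IsHermitian)
    (hlAtr : ∀ i, (lA i).trace = 0)
    (hlBtr : ∀ j, (lB j).trace = 0)
    (hlAorth : ∀ i j, (lA i * lA j).trace = if i = j then (2 : ℂ) else 0)
    (hlBorth : ∀ i j, (lB i * lB j).trace = if i = j then (2 : ℂ) else 0)
    (ρ : Matrix (Fin dA × Fin dB) (Fin dA × Fin dB) ℂ)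
    (hsep : IsSeparableState dA dB ρ)
    (r : Fin (dA ^ 2 - 1) → ℂ) (s : Fin (dB ^ 2 - 1) → ℂ)
    (T : Matrix (Fin (dA ^ 2 - 1)) (Fin (dB ^ 2 - 1)) ℂ)
    (hexp : ρ = ((dA * dB : ℂ))⁻¹ •
      ((1 : Matrix (Fin dA × Fin dB) (Fin dA × Fin dB) ℂ)
        + ∑ i, r i • (lA i ⊗ₖ (1 : Matrix (Fin dB) (Fin dB) ℂ))
        + ∑ j, s j • ((1 : Matrix (Fin dA) (Fin dA) ℂ) ⊗ₖ lB j)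
        + ∑ i, ∑ j, T i j • (lA i ⊗ₖ lB j)))
    (x y : ℝ) (n : ℕ) :
    traceNorm (normExtCorrTensor dA dB n x y r s T) ≤
      (1 / 2) * Real.sqrt ((2 * n * x ^ 2 + (dA : ℝ) ^ 2 - dA) *
        (2 * n * y ^ 2 + (dB : ℝ) ^ 2 - dB)) := by
  obtain ⟨N, p, ρA, ρB, hp0, hp1, hA, hB, rfl⟩ := hsep
  have horthA : ∀ i j, (lA i * lA j).trace = if i = j then ((2 : ℝ) : ℂ) else 0 := by
    simpa using hlAorth
  have horthB : ∀ i j, (lB i * lB j).trace = if i = j then ((2 : ℝ) : ℂ) else 0 := by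
    simpa using hlBorth
  set CA : ℝ := 2 * n * x ^ 2 + (dA : ℝ) ^ 2 - dA
  set CB : ℝ := 2 * n * y ^ 2 + (dB : ℝ) ^ 2 - dB
  have hnormA : ∀ k, ‖WithLp.toLp 2 (extBlochVector n x 2 lA (ρA k))‖ ≤ √(CA / 2) := fun k => by
    simpa using norm_toLp_extBlochVector_le n x two_pos hlAherm hlAtr horthA (hA k).1 (hA k).2
  have hnormB : ∀ k, ‖WithLp.toLp 2 (extBlochVector n y 2 lB (ρB k))‖ ≤ √(CB / 2) := fun k => by
    simpa using norm_toLp_extBlochVector_le n y two_pos hlBherm hlBtr horthB (hB k).1 (hB k).2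
  have hCA : 0 ≤ CA := by
    have : (2 : ℝ) ≤ dA := by exact_mod_cast hdA
    nlinarith [mul_nonneg (Nat.cast_nonneg (α := ℝ) n) (sq_nonneg x)]
  rw [normExtCorrTensor_eq_sum_vecMulVec (by omega) (by omega) two_ne_zero two_ne_zero hlAtr hlBtr
    horthA horthB hp1 (fun k => (hA k).2) (fun k => (hB k).2) hexp x y]
  calc _ ≤ ∑ k, ‖WithLp.toLp 2 ((p k : ℂ) • extBlochVector n x 2 lA (ρA k))‖ *
        ‖WithLp.toLp 2 (extBlochVector n y 2 lB (ρB k))‖ := traceNorm_sum_vecMulVec_le_s8 _ _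
    _ ≤ ∑ k, p k * (√(CA / 2) * √(CB / 2)) := Finset.sum_le_sum fun k _ => by
      rw [WithLp.toLp_smul, norm_smul, Complex.norm_real, Real.norm_of_nonneg (hp0 k), mul_assoc]
      exact mul_le_mul_of_nonneg_left
        (mul_le_mul (hnormA k) (hnormB k) (norm_nonneg _) (Real.sqrt_nonneg _)) (hp0 k)
    _ = _ := by
      rw [← Finset.sum_mul, hp1, one_mul, Real.sqrt_div_mul_sqrt_div hCA zero_le_two]
      ring

/-- **Shen's criterion** (Gell-Mann bases, `κ_A = κ_B = 2`): for a separable state,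
`‖M̂_{x,y}^{(n)}‖_tr ≤ (1/2)√((2n x² + d_A² − d_A)(2n y² + d_B² − d_B))`. -/
theorem traceNorm_normExtCorrTensor_le_of_separable_gellMann
    (dA dB : ℕ) (hdA : 2 ≤ dA) (hdB : 2 ≤ dB)
    (lA : Fin (dA ^ 2 - 1) → Matrix (Fin dA) (Fin dA) ℂ)
    (lB : Fin (dB ^ 2 - 1) → Matrix (Fin dB) (Fin dB) ℂ)
    (hlAherm : ∀ i, (lA i).IsHermitian)
    (hlBherm : ∀ j, (lB j).IsHermitian)
    (hlAtr : ∀ i, (lA i).trace = 0)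
    (hlBtr : ∀ j, (lB j).trace = 0)
    (hlAorth : ∀ i j, (lA i * lA j).trace = if i = j then (2 : ℂ) else 0)
    (hlBorth : ∀ i j, (lB i * lB j).trace = if i = j then (2 : ℂ) else 0)
    (hlAspan : ∀ X : Matrix (Fin dA) (Fin dA) ℂ, X.trace = 0 →
      X ∈ Submodule.span ℂ (Set.range lA))
    (hlBspan : ∀ X : Matrix (Fin dB) (Fin dB) ℂ, X.trace = 0 →
      X ∈ Submodule.span ℂ (Set.range lB))
    (ρ : Matrix (Fin dA × Fin dB) (Fin dA × Fin dB) ℂ)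
    (hρ : IsDensityMatrix ρ)
    (hsep : IsSeparableState dA dB ρ)
    (r : Fin (dA ^ 2 - 1) → ℂ) (s : Fin (dB ^ 2 - 1) → ℂ)
    (T : Matrix (Fin (dA ^ 2 - 1)) (Fin (dB ^ 2 - 1)) ℂ)
    (hexp : ρ = ((dA * dB : ℂ))⁻¹ •
      ((1 : Matrix (Fin dA × Fin dB) (Fin dA × Fin dB) ℂ)
        + ∑ i, r i • (lA i ⊗ₖ (1 : Matrix (Fin dB) (Fin dB) ℂ))
        + ∑ j, s j • ((1 : Matrix (Fin dA) (Fin dA) ℂ) ⊗ₖ lB j)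
        + ∑ i, ∑ j, T i j • (lA i ⊗ₖ lB j)))
    (x y : ℝ) (hx : 0 ≤ x) (hy : 0 ≤ y) (n : ℕ) (hn : 0 < n) :
    traceNorm (normExtCorrTensor dA dB n x y r s T) ≤
      (1 / 2) * Real.sqrt ((2 * n * x ^ 2 + (dA : ℝ) ^ 2 - dA) *
        (2 * n * y ^ 2 + (dB : ℝ) ^ 2 - dB)) :=
  traceNorm_normExtCorrTensor_le_of_separable_gellMann_general dA dB hdA hdB lA lB hlAherm hlBherm
    hlAtr hlBtr hlAorth hlBorth ρ hsep r s T hexp x y n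
end
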